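/- arXiv:2303.10919 — 4 statements merged into one kernel-verified Lean document; each statement's English description precedes it below -/
import Mathlib

section
/- Let λ_1, ..., λ_N be real numbers with |λ_k − λ_ℓ| ≥ 1 whenever k ≠ ℓ, and let z_1, ..., z_N be complex numbers. Then |∑_{k≠ℓ} z_k conj(z_ℓ)/(λ_k − λ_ℓ)| ≤ π ∑_{k=1}^N |z_k|². -/
open Finset Complex


lemma hasSum_int_inv_sq : HasSum (fun n : ℤ => (((n : ℝ)) ^ 2)⁻¹) (Real.pi ^ 2 / 3) := by
  have h0 : HasSum (fun n : ℕ => (((n : ℝ)) ^ 2)⁻¹) (Real.pi ^ 2 / 6) := by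
    simpa [one_div] using hasSum_zeta_two
  have h1 : HasSum (fun n : ℕ => ((((-(n + 1) : ℤ)) : ℝ) ^ 2)⁻¹) (Real.pi ^ 2 / 6) := by
    have h := (hasSum_nat_add_iff' (f := fun n : ℕ => (((n : ℝ)) ^ 2)⁻¹) 1).mpr h0
    norm_num at h
    convert h using 2 with n
    · rfl
    push_cast
    ring
  have h2 := HasSum.of_nat_of_neg_add_one (f := fun n : ℤ => (((n : ℝ)) ^ 2)⁻¹)
    (by exact_mod_cast h0) h1
  convert h2 using 1
  ring

lemma sep_sum {N : ℕ} (lam : Fin N → ℝ)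
    (hsep : ∀ k l : Fin N, k ≠ l → 1 ≤ |lam k - lam l|) (l : Fin N) :
    ∑ k ∈ Finset.univ.erase l, ((lam k - lam l) ^ 2)⁻¹ ≤ Real.pi ^ 2 / 3 := by
  classical
  set g : Fin N → ℤ := fun k => if lam l < lam k then ⌊lam k - lam l⌋ else -⌊lam l - lam k⌋ with hg
  have hfacts : ∀ k ∈ Finset.univ.erase l,
      (1 ≤ g k ∧ (g k : ℝ) ≤ lam k - lam l ∧ lam k - lam l < g k + 1) ∨
      (g k ≤ -1 ∧ (g k : ℝ) - 1 < lam k - lam l ∧ lam k - lam l ≤ g k) := by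
    intro k hk
    have hkl : k ≠ l := (Finset.mem_erase.mp hk).1
    have h1 := hsep k l hkl
    rcases le_abs'.mp h1 with hneg | hpos
    · have hlt : ¬ lam l < lam k := by linarith
      have hfl : (⌊lam l - lam k⌋ : ℝ) ≤ lam l - lam k := Int.floor_le _
      have hfl2 : lam l - lam k < ⌊lam l - lam k⌋ + 1 := Int.lt_floor_add_one _
      have hgk : g k = -⌊lam l - lam k⌋ := by simp [hg, hlt]
      refine Or.inr ?_
      have h1' : (1 : ℤ) ≤ ⌊lam l - lam k⌋ :=
        Int.le_floor.mpr (by push_cast; linarith)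
      refine ⟨by omega, ?_, ?_⟩
      · rw [hgk]; push_cast; linarith
      · rw [hgk]; push_cast; linarith
    · have hlt : lam l < lam k := by linarith
      have hfl : (⌊lam k - lam l⌋ : ℝ) ≤ lam k - lam l := Int.floor_le _
      have hfl2 : lam k - lam l < ⌊lam k - lam l⌋ + 1 := Int.lt_floor_add_one _
      have hgk : g k = ⌊lam k - lam l⌋ := by simp [hg, hlt]
      refine Or.inl ?_
      have h1' : (1 : ℤ) ≤ ⌊lam k - lam l⌋ := Int.le_floor.mpr (by exact_mod_cast hpos)
      exact ⟨by omega, by rw [hgk]; push_cast; linarith, by rw [hgk]; push_cast; linarith⟩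
  have hkey : ∀ k ∈ Finset.univ.erase l, ((lam k - lam l) ^ 2)⁻¹ ≤ (((g k : ℝ)) ^ 2)⁻¹ := by
    intro k hk
    rcases hfacts k hk with ⟨h1, h2, _⟩ | ⟨h1, _, h3⟩
    · have hg0 : (1 : ℝ) ≤ (g k : ℝ) := by exact_mod_cast h1
      apply inv_anti₀ (by positivity)
      nlinarith
    · have hg0 : (g k : ℝ) ≤ -1 := by exact_mod_cast h1
      apply inv_anti₀ (by nlinarith)
      nlinarith
  have hinj : ∀ k ∈ Finset.univ.erase l, ∀ k' ∈ Finset.univ.erase l, g k = g k' → k = k' := by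
    intro k hk k' hk' hgg
    by_contra hne
    have hs := hsep k k' hne
    have e1 := hfacts k hk
    have e2 := hfacts k' hk'
    have habs : |lam k - lam k'| < 1 := by
      rcases e1 with ⟨a1, a2, a3⟩ | ⟨a1, a2, a3⟩ <;> rcases e2 with ⟨b1, b2, b3⟩ | ⟨b1, b2, b3⟩ <;>
        rw [abs_lt] <;> rw [hgg] at a1 a2 a3
      · constructor <;> linarith
      · exfalso; omega
      · exfalso; omega
      · constructor <;> linarith
    linarith [habs, hs]
  calc ∑ k ∈ Finset.univ.erase l, ((lam k - lam l) ^ 2)⁻¹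
      ≤ ∑ k ∈ Finset.univ.erase l, (((g k : ℝ)) ^ 2)⁻¹ := Finset.sum_le_sum hkey
    _ = ∑ n ∈ (Finset.univ.erase l).image g, (((n : ℝ)) ^ 2)⁻¹ := by
        rw [Finset.sum_image hinj]
    _ ≤ Real.pi ^ 2 / 3 := sum_le_hasSum _ (fun n _ => by positivity) hasSum_int_inv_sq


lemma sum_ite_erase {M : Type*} [AddCommMonoid M] {N : ℕ} (l : Fin N) (f : Fin N → M) :
    ∑ k, (if k = l then 0 else f k) = ∑ k ∈ Finset.univ.erase l, f k := by
  rw [← Finset.sum_erase_add _ _ (Finset.mem_univ l), if_pos rfl, add_zero]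
  exact Finset.sum_congr rfl fun k hk => if_neg (Finset.mem_erase.mp hk).1

lemma erase_sum_comm {M : Type*} [AddCommMonoid M] {N : ℕ} (f : Fin N → Fin N → M) :
    ∑ l, ∑ m ∈ Finset.univ.erase l, f l m = ∑ m, ∑ l ∈ Finset.univ.erase m, f l m := by
  have h1 : ∀ l : Fin N, ∑ m ∈ Finset.univ.erase l, f l m = ∑ m, if m = l then 0 else f l m :=
    fun l => (sum_ite_erase l (f l)).symm
  have h2 : ∀ m : Fin N, ∑ l ∈ Finset.univ.erase m, f l m
      = ∑ l, if m = l then 0 else f l m := by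
    intro m
    rw [← sum_ite_erase m (fun l => f l m)]
    refine Finset.sum_congr rfl fun l _ => ?_
    by_cases h : l = m
    · simp [h]
    · rw [if_neg (show ¬m = l from fun hc => h hc.symm)]
      exact (if_neg h).symm ▸ rfl
  simp_rw [h1, h2]
  exact Finset.sum_comm


lemma eig_bound {N : ℕ} (lam : Fin N → ℝ)
    (hsep : ∀ k l : Fin N, k ≠ l → 1 ≤ |lam k - lam l|)
    (A : Matrix (Fin N) (Fin N) ℂ)
    (hA_def : ∀ k l, A k l = if k = l then 0 else -Complex.I / ((lam k : ℂ) - lam l))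
    (hherm : A.IsHermitian) (i : Fin N) : |hherm.eigenvalues i| ≤ Real.pi := by
  classical
  set c : Fin N → Fin N → ℂ := fun k l => (lam k : ℂ) - lam l with hc_def
  have hc_real : ∀ k l, c k l = ((lam k - lam l : ℝ) : ℂ) := by
    intro k l; simp [hc_def]
  have hc_ne : ∀ k l : Fin N, k ≠ l → c k l ≠ 0 := by
    intro k l h
    rw [hc_real]
    have h1 := hsep k l h
    simp only [ne_eq, Complex.ofReal_eq_zero]
    intro h0; rw [h0] at h1; norm_num at h1
  have hc_anti : ∀ k l, c k l = -c l k := by intro k l; simp [hc_def]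
  set μ : ℝ := hherm.eigenvalues i with hμ_def
  set w : Fin N → ℂ := ⇑(hherm.eigenvectorBasis i) with hw_def
  -- eigen equation
  have heig : ∀ k, ∑ l, A k l * w l = (μ : ℂ) * w k := by
    have h := hherm.mulVec_eigenvectorBasis i
    intro k
    have h2 := congrFun h k
    simpa [Matrix.mulVec, dotProduct, Complex.real_smul] using h2
  set u : Fin N → ℂ := fun k => ∑ l, if l = k then 0 else w l / c k l with hu_def
  have heu : ∀ k, u k = Complex.I * μ * w k := by
    intro k
    have h := heig k
    have h2 : ∑ l, A k l * w l = -Complex.I * u k := by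
      rw [hu_def]
      simp only [Finset.mul_sum]
      refine Finset.sum_congr rfl fun l _ => ?_
      by_cases hlk : l = k
      · subst hlk; simp [hA_def]
      · rw [hA_def, if_neg (show ¬k = l from fun hc => hlk hc.symm), if_neg hlk]
        rw [div_mul_eq_mul_div, mul_div_assoc]
    rw [h2] at h
    linear_combination Complex.I * h + u k * Complex.I_sq
  have hcu : ∀ k, (starRingEnd ℂ) (u k) = -Complex.I * μ * (starRingEnd ℂ) (w k) := by
    intro k; rw [heu k]; simp [Complex.conj_ofReal]
  -- norm one
  have hw2 : ∑ k, ‖w k‖ ^ 2 = 1 := by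
    have hn : ‖hherm.eigenvectorBasis i‖ = 1 := hherm.eigenvectorBasis.orthonormal.1 i
    rw [EuclideanSpace.norm_eq] at hn
    have := Real.sqrt_eq_one.mp hn
    simpa [hw_def] using this
  have hw1 : ∑ k, w k * (starRingEnd ℂ) (w k) = 1 := by
    have : ∀ k, w k * (starRingEnd ℂ) (w k) = ((‖w k‖ ^ 2 : ℝ) : ℂ) := by
      intro k
      rw [Complex.mul_conj]
      norm_cast
      rw [Complex.normSq_eq_norm_sq]
    simp_rw [this]
    rw [← Complex.ofReal_sum, hw2, Complex.ofReal_one]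
  have hwk : ∀ k, w k * (starRingEnd ℂ) (w k) = ((‖w k‖ ^ 2 : ℝ) : ℂ) := by
    intro k
    rw [Complex.mul_conj]
    norm_cast
    rw [Complex.normSq_eq_norm_sq]
  set Sl : Fin N → ℂ := fun l => ∑ k, if k = l then 0 else 1 / c k l with hSl_def
  set K : Fin N → Fin N → ℂ :=
    fun l m => ∑ k, if k = l ∨ k = m then 0 else 1 / (c k l * c k m) with hK_def
  set T : Fin N → ℝ := fun l => ∑ k ∈ Finset.univ.erase l, ((lam k - lam l) ^ 2)⁻¹ with hT_def
  have hT_nonneg : ∀ l, 0 ≤ T l := fun l => Finset.sum_nonneg fun k _ => by positivity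
  have hT_le : ∀ l, T l ≤ Real.pi ^ 2 / 3 := fun l => sep_sum lam hsep l
  have hKll : ∀ l, K l l = ((T l : ℝ) : ℂ) := by
    intro l
    simp only [hK_def, hT_def, or_self]
    rw [sum_ite_erase l (fun k => 1 / (c k l * c k l))]
    push_cast
    refine Finset.sum_congr rfl fun k hk => ?_
    rw [hc_real]
    push_cast
    rw [one_div, ← pow_two]
  -- conj of u as a sum
  have hcu_sum : ∀ k, (starRingEnd ℂ) (u k)
      = ∑ m, if m = k then 0 else (starRingEnd ℂ) (w m) / c k m := by
    intro k
    simp only [hu_def]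
    rw [map_sum]
    refine Finset.sum_congr rfl fun m _ => ?_
    by_cases hmk : m = k
    · simp [hmk]
    · rw [if_neg hmk, if_neg hmk, map_div₀, hc_real, Complex.conj_ofReal, ← hc_real]
  -- expansion of μ² as quadratic form
  have hexp : ((μ ^ 2 : ℝ) : ℂ) = ∑ l, ∑ m, w l * (starRingEnd ℂ) (w m) * K l m := by
    have h1 : ∀ k, u k * (starRingEnd ℂ) (u k)
        = ∑ l, ∑ m, (if l = k then 0 else w l / c k l) *
            (if m = k then 0 else (starRingEnd ℂ) (w m) / c k m) := by
      intro k
      rw [hcu_sum k]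
      conv_lhs => rw [hu_def]
      rw [Finset.sum_mul_sum]
    have h2 : ((μ ^ 2 : ℝ) : ℂ) = ∑ k, u k * (starRingEnd ℂ) (u k) := by
      have hterm : ∀ k, u k * (starRingEnd ℂ) (u k)
          = ((μ ^ 2 : ℝ) : ℂ) * (w k * (starRingEnd ℂ) (w k)) := by
        intro k
        rw [hcu k, heu k]
        push_cast
        linear_combination (-(μ:ℂ) ^ 2 * w k * (starRingEnd ℂ) (w k)) * Complex.I_sq
      rw [Finset.sum_congr rfl fun k _ => hterm k, ← Finset.mul_sum, hw1, mul_one]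
    rw [h2, Finset.sum_congr rfl fun k _ => h1 k]
    rw [Finset.sum_comm]
    refine Finset.sum_congr rfl fun l _ => ?_
    rw [Finset.sum_comm]
    refine Finset.sum_congr rfl fun m _ => ?_
    simp only [hK_def]
    rw [Finset.mul_sum]
    refine Finset.sum_congr rfl fun k _ => ?_
    by_cases hl : l = k
    · rw [if_pos hl, if_pos (Or.inl hl.symm), mul_zero, zero_mul]
    · by_cases hm : m = k
      · rw [if_neg hl, if_pos hm, if_pos (Or.inr hm.symm), mul_zero, mul_zero]
      · rw [if_neg hl, if_neg hm,
          if_neg (show ¬(k = l ∨ k = m) from by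
            push_neg
            exact ⟨fun hc => hl hc.symm, fun hc => hm hc.symm⟩)]
        rw [div_mul_div_comm, mul_one_div]
  -- partial fractions
  have hK2 : ∀ l m : Fin N, l ≠ m → K l m * (c l m) ^ 2 = (Sl l - Sl m) * c l m + 2 := by
    intro l m hlm
    have hclm := hc_ne l m hlm
    simp only [hK_def, hSl_def]
    rw [Finset.sum_mul]
    have hpt : ∀ k : Fin N,
        (if k = l ∨ k = m then 0 else 1 / (c k l * c k m)) * (c l m) ^ 2
        = ((if k = l then 0 else 1 / c k l) - (if k = m then 0 else 1 / c k m)) * c l m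
          + ((if k = l then (1:ℂ) else 0) + (if k = m then (1:ℂ) else 0)) := by
      intro k
      by_cases hkl : k = l
      · subst hkl
        rw [if_pos (Or.inl rfl), if_pos rfl, if_neg hlm, if_pos rfl,
          if_neg (show ¬k = m from hlm)]
        have h2 : c k m ≠ 0 := hc_ne k m hlm
        field_simp
        ring
      · by_cases hkm : k = m
        · subst hkm
          rw [if_pos (Or.inr rfl), if_neg hkl, if_pos rfl, if_neg hkl, if_pos rfl]
          have h1 : c k l ≠ 0 := hc_ne k l hkl
          simp only [hc_def] at h1 ⊢
          field_simp
          ring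
        · rw [if_neg (show ¬(k = l ∨ k = m) from by push_neg; exact ⟨hkl, hkm⟩),
            if_neg hkl, if_neg hkm, if_neg hkl, if_neg hkm]
          have h1 : c k l ≠ 0 := hc_ne k l hkl
          have h2 : c k m ≠ 0 := hc_ne k m hkm
          simp only [hc_def] at h1 h2 ⊢
          field_simp
          ring
    rw [Finset.sum_congr rfl fun k _ => hpt k]
    rw [Finset.sum_add_distrib, Finset.sum_add_distrib, ← Finset.sum_mul,
      Finset.sum_sub_distrib]
    rw [Finset.sum_ite_eq' Finset.univ l (fun _ => (1:ℂ)),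
      Finset.sum_ite_eq' Finset.univ m (fun _ => (1:ℂ))]
    simp only [Finset.mem_univ, if_pos]
    ring
  -- split diagonal
  have hsplit : ((μ ^ 2 : ℝ) : ℂ)
      = ∑ l, w l * (starRingEnd ℂ) (w l) * K l l
        + ∑ l, ∑ m ∈ Finset.univ.erase l, w l * (starRingEnd ℂ) (w m) * K l m := by
    rw [hexp, ← Finset.sum_add_distrib]
    refine Finset.sum_congr rfl fun l _ => ?_
    exact (Finset.add_sum_erase Finset.univ
      (fun m => w l * (starRingEnd ℂ) (w m) * K l m) (Finset.mem_univ l)).symm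
  set R : ℂ := ∑ l, ∑ m ∈ Finset.univ.erase l,
    w l * (starRingEnd ℂ) (w m) / (c l m) ^ 2 with hR_def
  have hcross : ∑ l, ∑ m ∈ Finset.univ.erase l, w l * (starRingEnd ℂ) (w m) * K l m
      = 2 * R := by
    have hGlm : ∀ l : Fin N, ∀ m ∈ Finset.univ.erase l,
        w l * (starRingEnd ℂ) (w m) * K l m
        = (w l * (starRingEnd ℂ) (w m) * Sl l / c l m
            - w l * (starRingEnd ℂ) (w m) * Sl m / c l m)
          + 2 * (w l * (starRingEnd ℂ) (w m) / (c l m) ^ 2) := by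
      intro l m hm
      have hml : m ≠ l := (Finset.mem_erase.mp hm).1
      have hlm : l ≠ m := fun h => hml h.symm
      have hclm := hc_ne l m hlm
      have h := hK2 l m hlm
      obtain ⟨γ, hγ⟩ : ∃ γ, c l m = γ := ⟨_, rfl⟩
      rw [hγ] at h hclm ⊢
      field_simp
      linear_combination (w l * (starRingEnd ℂ) (w m)) * h
    rw [Finset.sum_congr rfl fun l _ => Finset.sum_congr rfl (hGlm l)]
    rw [Finset.sum_congr rfl fun l _ => Finset.sum_add_distrib]
    rw [Finset.sum_add_distrib]
    have hE : ∑ l, ∑ m ∈ Finset.univ.erase l,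
        (w l * (starRingEnd ℂ) (w m) * Sl l / c l m
          - w l * (starRingEnd ℂ) (w m) * Sl m / c l m) = 0 := by
      rw [Finset.sum_congr rfl fun l _ => Finset.sum_sub_distrib _ _]
      rw [Finset.sum_sub_distrib]
      have hinner1 : ∀ l, ∑ m ∈ Finset.univ.erase l, (starRingEnd ℂ) (w m) / c l m
          = (starRingEnd ℂ) (u l) := by
        intro l
        rw [hcu_sum l, sum_ite_erase l (fun m => (starRingEnd ℂ) (w m) / c l m)]
      have hinner2 : ∀ m, ∑ l ∈ Finset.univ.erase m, w l / c l m = -u m := by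
        intro m
        have h1 : u m = ∑ l ∈ Finset.univ.erase m, w l / c m l := by
          simp only [hu_def]
          exact sum_ite_erase m (fun l => w l / c m l)
        rw [h1, ← Finset.sum_neg_distrib]
        refine Finset.sum_congr rfl fun l _ => ?_
        rw [hc_anti l m, div_neg]
      have hE1 : ∑ l, ∑ m ∈ Finset.univ.erase l,
          w l * (starRingEnd ℂ) (w m) * Sl l / c l m
          = ∑ l, w l * Sl l * (-Complex.I * μ * (starRingEnd ℂ) (w l)) := by
        refine Finset.sum_congr rfl fun l _ => ?_
        have hfac : ∑ m ∈ Finset.univ.erase l, w l * (starRingEnd ℂ) (w m) * Sl l / c l m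
            = w l * Sl l * ∑ m ∈ Finset.univ.erase l, (starRingEnd ℂ) (w m) / c l m := by
          rw [Finset.mul_sum]
          exact Finset.sum_congr rfl fun m _ => by ring
        rw [hfac, hinner1 l, hcu l]
      have hE2 : ∑ l, ∑ m ∈ Finset.univ.erase l,
          w l * (starRingEnd ℂ) (w m) * Sl m / c l m
          = ∑ m, (starRingEnd ℂ) (w m) * Sl m * (-(Complex.I * μ * w m)) := by
        rw [erase_sum_comm]
        refine Finset.sum_congr rfl fun m _ => ?_
        have hfac : ∑ l ∈ Finset.univ.erase m, w l * (starRingEnd ℂ) (w m) * Sl m / c l m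
            = (starRingEnd ℂ) (w m) * Sl m * ∑ l ∈ Finset.univ.erase m, w l / c l m := by
          rw [Finset.mul_sum]
          exact Finset.sum_congr rfl fun l _ => by ring
        rw [hfac, hinner2 m, heu m]
      rw [hE1, hE2, ← Finset.sum_sub_distrib]
      refine Finset.sum_eq_zero fun l _ => ?_
      ring
    rw [hE, zero_add, hR_def]
    rw [Finset.mul_sum]
    refine Finset.sum_congr rfl fun l _ => ?_
    rw [Finset.mul_sum]
  -- real-part equation
  have hfinal : ((μ ^ 2 : ℝ) : ℂ) = ((∑ l, ‖w l‖ ^ 2 * T l : ℝ) : ℂ) + 2 * R := by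
    rw [hsplit, hcross]
    congr 1
    push_cast
    refine Finset.sum_congr rfl fun l _ => ?_
    rw [hKll l, hwk l]
    push_cast
    ring
  have hreal : μ ^ 2 = (∑ l, ‖w l‖ ^ 2 * T l) + 2 * R.re := by
    have h := congrArg Complex.re hfinal
    rw [Complex.ofReal_re, Complex.add_re, Complex.ofReal_re] at h
    have h2 : (2 * R).re = 2 * R.re := by simp
    rw [h2] at h
    exact h
  -- bound on R.re
  have hR_bound : R.re ≤ Real.pi ^ 2 / 3 := by
    have h1 : R.re ≤ ‖R‖ := Complex.re_le_norm R
    have h2 : ‖R‖ ≤ ∑ l, ∑ m ∈ Finset.univ.erase l,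
        ‖w l‖ * ‖w m‖ * (((lam l - lam m) ^ 2)⁻¹) := by
      refine (norm_sum_le _ _).trans ?_
      refine Finset.sum_le_sum fun l _ => ?_
      refine (norm_sum_le _ _).trans ?_
      refine Finset.sum_le_sum fun m hm => ?_
      have hd : ‖(c l m) ^ 2‖ = (lam l - lam m) ^ 2 := by
        rw [norm_pow, hc_real, Complex.norm_real, Real.norm_eq_abs, _root_.sq_abs]
      rw [norm_div, norm_mul, RCLike.norm_conj, hd, div_eq_mul_inv]
    have h3 : ∑ l, ∑ m ∈ Finset.univ.erase l,
        ‖w l‖ * ‖w m‖ * (((lam l - lam m) ^ 2)⁻¹) ≤ Real.pi ^ 2 / 3 := by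
      have step1 : ∑ l, ∑ m ∈ Finset.univ.erase l,
          ‖w l‖ * ‖w m‖ * (((lam l - lam m) ^ 2)⁻¹)
          ≤ ∑ l, ∑ m ∈ Finset.univ.erase l,
            ((‖w l‖ ^ 2 / 2) * (((lam l - lam m) ^ 2)⁻¹)
              + (‖w m‖ ^ 2 / 2) * (((lam l - lam m) ^ 2)⁻¹)) := by
        refine Finset.sum_le_sum fun l _ => Finset.sum_le_sum fun m _ => ?_
        have hh : ‖w l‖ * ‖w m‖ ≤ ‖w l‖ ^ 2 / 2 + ‖w m‖ ^ 2 / 2 := by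
          nlinarith [sq_nonneg (‖w l‖ - ‖w m‖)]
        have hpos : (0:ℝ) ≤ ((lam l - lam m) ^ 2)⁻¹ := by positivity
        calc ‖w l‖ * ‖w m‖ * (((lam l - lam m) ^ 2)⁻¹)
            ≤ (‖w l‖ ^ 2 / 2 + ‖w m‖ ^ 2 / 2) * (((lam l - lam m) ^ 2)⁻¹) :=
              mul_le_mul_of_nonneg_right hh hpos
          _ = (‖w l‖ ^ 2 / 2) * (((lam l - lam m) ^ 2)⁻¹)
              + (‖w m‖ ^ 2 / 2) * (((lam l - lam m) ^ 2)⁻¹) := by ring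
      have hsym : ∀ l, ∑ m ∈ Finset.univ.erase l, ((lam l - lam m) ^ 2)⁻¹ ≤ Real.pi ^ 2 / 3 := by
        intro l
        have : ∑ m ∈ Finset.univ.erase l, ((lam l - lam m) ^ 2)⁻¹
            = ∑ m ∈ Finset.univ.erase l, ((lam m - lam l) ^ 2)⁻¹ := by
          refine Finset.sum_congr rfl fun m _ => ?_
          rw [show (lam l - lam m) ^ 2 = (lam m - lam l) ^ 2 from by ring]
        rw [this]
        exact sep_sum lam hsep l
      have step2 : ∑ l, ∑ m ∈ Finset.univ.erase l,
          (‖w l‖ ^ 2 / 2) * (((lam l - lam m) ^ 2)⁻¹) ≤ Real.pi ^ 2 / 6 := by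
        calc ∑ l, ∑ m ∈ Finset.univ.erase l, (‖w l‖ ^ 2 / 2) * (((lam l - lam m) ^ 2)⁻¹)
            = ∑ l, (‖w l‖ ^ 2 / 2) * ∑ m ∈ Finset.univ.erase l, ((lam l - lam m) ^ 2)⁻¹ := by
              exact Finset.sum_congr rfl fun l _ => (Finset.mul_sum _ _ _).symm
          _ ≤ ∑ l, (‖w l‖ ^ 2 / 2) * (Real.pi ^ 2 / 3) := by
              refine Finset.sum_le_sum fun l _ => ?_
              exact mul_le_mul_of_nonneg_left (hsym l) (by positivity)
          _ = (Real.pi ^ 2 / 6) * ∑ l, ‖w l‖ ^ 2 := by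
              rw [Finset.mul_sum]
              exact Finset.sum_congr rfl fun l _ => by ring
          _ = Real.pi ^ 2 / 6 := by rw [hw2, mul_one]
      have step3 : ∑ l, ∑ m ∈ Finset.univ.erase l,
          (‖w m‖ ^ 2 / 2) * (((lam l - lam m) ^ 2)⁻¹) ≤ Real.pi ^ 2 / 6 := by
        rw [erase_sum_comm]
        calc ∑ m, ∑ l ∈ Finset.univ.erase m, (‖w m‖ ^ 2 / 2) * (((lam l - lam m) ^ 2)⁻¹)
            = ∑ m, (‖w m‖ ^ 2 / 2) * ∑ l ∈ Finset.univ.erase m, ((lam l - lam m) ^ 2)⁻¹ := by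
              exact Finset.sum_congr rfl fun m _ => (Finset.mul_sum _ _ _).symm
          _ ≤ ∑ m, (‖w m‖ ^ 2 / 2) * (Real.pi ^ 2 / 3) := by
              refine Finset.sum_le_sum fun m _ => ?_
              refine mul_le_mul_of_nonneg_left ?_ (by positivity)
              exact sep_sum lam hsep m
          _ = (Real.pi ^ 2 / 6) * ∑ m, ‖w m‖ ^ 2 := by
              rw [Finset.mul_sum]
              exact Finset.sum_congr rfl fun m _ => by ring
          _ = Real.pi ^ 2 / 6 := by rw [hw2, mul_one]
      calc ∑ l, ∑ m ∈ Finset.univ.erase l, ‖w l‖ * ‖w m‖ * (((lam l - lam m) ^ 2)⁻¹)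
          ≤ ∑ l, ∑ m ∈ Finset.univ.erase l,
            ((‖w l‖ ^ 2 / 2) * (((lam l - lam m) ^ 2)⁻¹)
              + (‖w m‖ ^ 2 / 2) * (((lam l - lam m) ^ 2)⁻¹)) := step1
        _ = ∑ l, ∑ m ∈ Finset.univ.erase l, (‖w l‖ ^ 2 / 2) * (((lam l - lam m) ^ 2)⁻¹)
            + ∑ l, ∑ m ∈ Finset.univ.erase l, (‖w m‖ ^ 2 / 2) * (((lam l - lam m) ^ 2)⁻¹) := by
            rw [← Finset.sum_add_distrib]
            exact Finset.sum_congr rfl fun l _ => Finset.sum_add_distrib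
        _ ≤ Real.pi ^ 2 / 6 + Real.pi ^ 2 / 6 := add_le_add step2 step3
        _ = Real.pi ^ 2 / 3 := by ring
    linarith
  -- diagonal bound
  have hdiag : (∑ l, ‖w l‖ ^ 2 * T l) ≤ Real.pi ^ 2 / 3 := by
    calc ∑ l, ‖w l‖ ^ 2 * T l ≤ ∑ l, ‖w l‖ ^ 2 * (Real.pi ^ 2 / 3) :=
          Finset.sum_le_sum fun l _ =>
            mul_le_mul_of_nonneg_left (hT_le l) (by positivity)
      _ = (∑ l, ‖w l‖ ^ 2) * (Real.pi ^ 2 / 3) := by rw [← Finset.sum_mul]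
      _ = Real.pi ^ 2 / 3 := by rw [hw2, one_mul]
  have hμ2 : μ ^ 2 ≤ Real.pi ^ 2 := by
    rw [hreal]
    linarith
  nlinarith [_root_.sq_abs μ, abs_nonneg μ, Real.pi_pos]


/-- Hilbert's inequality for 1-separated real frequencies. -/
theorem hilbert_inequality (N : ℕ) (lam : Fin N → ℝ)
    (hsep : ∀ k l : Fin N, k ≠ l → 1 ≤ |lam k - lam l|) (z : Fin N → ℂ) :
    ‖∑ k : Fin N, ∑ l : Fin N,
        if k ≠ l then z k * starRingEnd ℂ (z l) / ((lam k : ℂ) - lam l) else 0‖ ≤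
      Real.pi * ∑ k : Fin N, ‖z k‖ ^ 2 := by
  classical
  set A : Matrix (Fin N) (Fin N) ℂ :=
    Matrix.of (fun k l => if k = l then 0 else -Complex.I / ((lam k : ℂ) - lam l)) with hA
  have hA_def : ∀ k l, A k l = if k = l then 0 else -Complex.I / ((lam k : ℂ) - lam l) :=
    fun k l => rfl
  have hherm : A.IsHermitian := by
    ext k l
    rw [Matrix.conjTranspose_apply, hA_def, hA_def]
    by_cases h : l = k
    · subst h; simp
    · rw [if_neg h, if_neg (fun hc => h hc.symm)]
      rw [RCLike.star_def, map_div₀, map_neg, Complex.conj_I]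
      have hc : (starRingEnd ℂ) ((lam l : ℂ) - lam k) = (lam l : ℂ) - lam k := by
        rw [map_sub, Complex.conj_ofReal, Complex.conj_ofReal]
      rw [hc, neg_neg, show ((lam l : ℂ) - lam k) = -(((lam k : ℂ) - lam l)) from by ring,
        div_neg, neg_div]
  -- quadratic form bound
  have hquad : ∀ x : EuclideanSpace ℂ (Fin N),
      ‖∑ k, (starRingEnd ℂ) (x k) * ∑ l, A k l * x l‖ ≤ Real.pi * ∑ k, ‖x k‖ ^ 2 := by
    intro x
    set v := hherm.eigenvectorBasis with hv
    set μ : Fin N → ℝ := hherm.eigenvalues with hμ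
    set y : EuclideanSpace ℂ (Fin N) :=
      (WithLp.equiv 2 _).symm (A.mulVec ((WithLp.equiv 2 _) x)) with hy
    have hinner_sum : ∀ a b : EuclideanSpace ℂ (Fin N),
        (inner ℂ a b : ℂ) = ∑ k, (starRingEnd ℂ) (a k) * b k := by
      intro a b
      rw [EuclideanSpace.inner_eq_star_dotProduct]
      rw [dotProduct]; exact Finset.sum_congr rfl fun k _ => mul_comm _ _
    have h1 : (∑ k, (starRingEnd ℂ) (x k) * ∑ l, A k l * x l) = (inner ℂ x y : ℂ) := by
      rw [hinner_sum]
      rfl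
    have hAconj : ∀ k l, (starRingEnd ℂ) (A l k) = A k l := by
      intro k l
      have := congrFun (congrFun hherm k) l
      rw [Matrix.conjTranspose_apply] at this
      exact this
    have hself : ∀ j, (inner ℂ (v j) y : ℂ) = ((μ j : ℝ) : ℂ) * (inner ℂ (v j) x : ℂ) := by
      intro j
      rw [hinner_sum, hinner_sum]
      have hAv : ∀ l, ∑ k, (starRingEnd ℂ) (v j k) * A k l
          = ((μ j : ℝ) : ℂ) * (starRingEnd ℂ) (v j l) := by
        intro l
        have hm := hherm.mulVec_eigenvectorBasis j
        have hml := congrFun hm l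
        have hsum : ∑ k, A l k * v j k = ((μ j : ℝ) : ℂ) * v j l := by
          simpa [Matrix.mulVec, dotProduct, Complex.real_smul] using hml
        have hc := congrArg (starRingEnd ℂ) hsum
        simp only [map_sum, map_mul, Complex.conj_ofReal] at hc
        rw [← hc]
        refine Finset.sum_congr rfl fun k _ => ?_
        rw [hAconj k l, mul_comm]
      have hyk : ∀ k, y k = ∑ l, A k l * x l := fun k => rfl
      calc ∑ k, (starRingEnd ℂ) (v j k) * y k
          = ∑ k, ∑ l, (starRingEnd ℂ) (v j k) * (A k l * x l) := by
            refine Finset.sum_congr rfl fun k _ => ?_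
            rw [hyk k, Finset.mul_sum]
        _ = ∑ l, ∑ k, (starRingEnd ℂ) (v j k) * (A k l * x l) := Finset.sum_comm
        _ = ∑ l, (∑ k, (starRingEnd ℂ) (v j k) * A k l) * x l := by
            refine Finset.sum_congr rfl fun l _ => ?_
            rw [Finset.sum_mul]
            exact Finset.sum_congr rfl fun k _ => by ring
        _ = ∑ l, (((μ j : ℝ) : ℂ) * (starRingEnd ℂ) (v j l)) * x l := by
            refine Finset.sum_congr rfl fun l _ => ?_
            rw [hAv l]
        _ = ((μ j : ℝ) : ℂ) * ∑ l, (starRingEnd ℂ) (v j l) * x l := by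
            rw [Finset.mul_sum]
            exact Finset.sum_congr rfl fun l _ => by ring
    have hbound : ∀ j, |μ j| ≤ Real.pi := fun j => eig_bound lam hsep A hA_def hherm j
    have hpars := v.sum_inner_mul_inner x y
    have hx2 : ∑ j, ‖(inner ℂ (v j) x : ℂ)‖ ^ 2 = ∑ k, ‖x k‖ ^ 2 := by
      have hp2 := v.sum_inner_mul_inner x x
      have hterm : ∀ j, (inner ℂ x (v j) : ℂ) * (inner ℂ (v j) x : ℂ)
          = ((‖(inner ℂ (v j) x : ℂ)‖ ^ 2 : ℝ) : ℂ) := by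
        intro j
        rw [← inner_conj_symm x (v j), Complex.conj_mul']
        norm_cast
      rw [Finset.sum_congr rfl fun j _ => hterm j] at hp2
      rw [inner_self_eq_norm_sq_to_K, ← Complex.ofReal_sum] at hp2
      have hp3 : ∑ j, ‖(inner ℂ (v j) x : ℂ)‖ ^ 2 = ‖x‖ ^ 2 := by simpa [← Complex.ofReal_pow] using congrArg Complex.re hp2
      rw [hp3, EuclideanSpace.norm_eq]
      rw [Real.sq_sqrt (Finset.sum_nonneg fun k _ => by positivity)]
    calc ‖∑ k, (starRingEnd ℂ) (x k) * ∑ l, A k l * x l‖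
        = ‖(inner ℂ x y : ℂ)‖ := by rw [h1]
      _ = ‖∑ j, (inner ℂ x (v j) : ℂ) * (inner ℂ (v j) y : ℂ)‖ := by rw [hpars]
      _ ≤ ∑ j, ‖(inner ℂ x (v j) : ℂ) * (inner ℂ (v j) y : ℂ)‖ := norm_sum_le _ _
      _ ≤ ∑ j, Real.pi * ‖(inner ℂ (v j) x : ℂ)‖ ^ 2 := by
          refine Finset.sum_le_sum fun j _ => ?_
          rw [norm_mul, hself j, norm_mul]
          rw [norm_inner_symm x (v j)]
          have h5 : ‖(((μ j : ℝ)) : ℂ)‖ = |μ j| := by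
            rw [Complex.norm_real, Real.norm_eq_abs]
          rw [h5]
          calc ‖(inner ℂ (v j) x : ℂ)‖ * (|μ j| * ‖(inner ℂ (v j) x : ℂ)‖)
              ≤ ‖(inner ℂ (v j) x : ℂ)‖ * (Real.pi * ‖(inner ℂ (v j) x : ℂ)‖) := by
                refine mul_le_mul_of_nonneg_left ?_ (norm_nonneg _)
                exact mul_le_mul_of_nonneg_right (hbound j) (norm_nonneg _)
            _ = Real.pi * ‖(inner ℂ (v j) x : ℂ)‖ ^ 2 := by ring
      _ = Real.pi * ∑ j, ‖(inner ℂ (v j) x : ℂ)‖ ^ 2 := by rw [Finset.mul_sum]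
      _ = Real.pi * ∑ k, ‖x k‖ ^ 2 := by rw [hx2]
  -- apply with x = conjugate of z
  set x : EuclideanSpace ℂ (Fin N) := (WithLp.equiv 2 _).symm (fun k => (starRingEnd ℂ) (z k))
    with hx
  have hxk : ∀ k, x k = (starRingEnd ℂ) (z k) := fun k => rfl
  have htarget : (∑ k : Fin N, ∑ l : Fin N,
        if k ≠ l then z k * starRingEnd ℂ (z l) / ((lam k : ℂ) - lam l) else 0)
      = Complex.I * ∑ k, (starRingEnd ℂ) (x k) * ∑ l, A k l * x l := by
    rw [Finset.mul_sum]
    refine Finset.sum_congr rfl fun k _ => ?_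
    rw [Finset.mul_sum, Finset.mul_sum]
    refine Finset.sum_congr rfl fun l _ => ?_
    rw [hxk k, hxk l, hA_def, Complex.conj_conj]
    by_cases h : k = l
    · rw [if_pos h, if_neg (fun hc => hc h)]
      simp
    · rw [if_neg h, if_pos h]
      linear_combination (z k * (starRingEnd ℂ) (z l) / ((lam k : ℂ) - (lam l : ℂ)))
        * Complex.I_sq
  rw [htarget, norm_mul, Complex.norm_I, one_mul]
  calc ‖∑ k, (starRingEnd ℂ) (x k) * ∑ l, A k l * x l‖
      ≤ Real.pi * ∑ k, ‖x k‖ ^ 2 := hquad x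
    _ = Real.pi * ∑ k, ‖z k‖ ^ 2 := by
        congr 1
        exact Finset.sum_congr rfl fun k _ => by rw [hxk k, RCLike.norm_conj]
end

section
/- Let f be a bounded measurable function on an interval I of length L with Fourier coefficients c_s(f) = (1/L) ∫_I f(t) e^{-2πi s t / L} dt for s ∈ ℤ, such that |f| ≤ 1 on I. Define h on I by the Fourier series h(t) = c_0(|f|) + 2 ∑_{s=1}^∞ c_s(|f|) e^{2πi s t / L}. Then Re(h) = |f| almost everywhere on I, and the L²(I) norm of h is at most √2 times the L²(I) norm of f. -/
open MeasureTheory intervalIntegral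


open MeasureTheory intervalIntegral Set
open scoped ComplexConjugate Real

namespace AnalyticProj

variable (A L : ℝ) [hL : Fact (0 < L)]

lemma sm_liftIoc {g : ℝ → ℂ} (hg : StronglyMeasurable g) :
    StronglyMeasurable (AddCircle.liftIoc L A g) :=
  hg.comp_measurable
    (measurable_subtype_coe.comp (AddCircle.measurableEquivIoc L A).measurable)

lemma coe_ae_Ioc {P : ℝ → Prop}
    (h : ∀ᵐ t ∂volume.restrict (Set.Ioc A (A + L)), P t) :
    ∀ᵐ x ∂(volume.restrict (Set.Icc A (A + L))), P x := by
  rwa [Measure.restrict_congr_set Ioc_ae_eq_Icc] at h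

/-- transfer a measurable a.e. property on the circle to the interval -/
lemma ae_of_ae_circle {P : AddCircle L → Prop}
    (hP : MeasurableSet {x | P x})
    (h : ∀ᵐ x ∂(volume : Measure (AddCircle L)), P x) :
    ∀ᵐ t ∂(volume : Measure ℝ).restrict (Set.Ioc A (A + L)), P ((t : ℝ) : AddCircle L) := by
  have h2 : ∀ᵐ x ∂(Measure.map ((↑) : ℝ → AddCircle L)
      (volume.restrict (Set.Ioc A (A + L)))), P x := by
    rwa [(AddCircle.measurePreserving_mk L A).map_eq]
  exact (MeasureTheory.ae_map_iff AddCircle.measurable_mk'.aemeasurable hP).mp h2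

lemma ae_haar_of_volume {P : AddCircle L → Prop}
    (h : ∀ᵐ x ∂(AddCircle.haarAddCircle : Measure (AddCircle L)), P x) :
    ∀ᵐ x ∂(volume : Measure (AddCircle L)), P x := by
  rw [AddCircle.volume_eq_smul_haarAddCircle]
  exact Measure.ae_smul_measure h _

lemma integral_sq_lift {g g' : ℝ → ℂ} (hg' : StronglyMeasurable g')
    (hgg' : g =ᵐ[volume.restrict (Set.Ioc A (A + L))] g') :
    ∫ t in Set.Icc A (A + L), ‖g t‖ ^ 2 =
      L * ∫ x, ‖AddCircle.liftIoc L A g' x‖ ^ 2 ∂(AddCircle.haarAddCircle) := by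
  have h1 : ∫ t in Set.Icc A (A + L), ‖g t‖ ^ 2
      = ∫ t in Set.Ioc A (A + L), ‖AddCircle.liftIoc L A g' ↑t‖ ^ 2 := by
    rw [← Measure.restrict_congr_set Ioc_ae_eq_Icc]
    refine integral_congr_ae ?_
    filter_upwards [hgg', ae_restrict_mem measurableSet_Ioc] with t ht htm
    rw [ht, AddCircle.liftIoc_coe_apply htm]
  rw [h1, AddCircle.integral_preimage L A (fun x => ‖AddCircle.liftIoc L A g' x‖ ^ 2),
    AddCircle.volume_eq_smul_haarAddCircle, MeasureTheory.integral_smul_measure,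
    ENNReal.toReal_ofReal hL.out.le, smul_eq_mul]

lemma fourierCoeff_lift_eq {g g' : ℝ → ℂ}
    (hgg' : g =ᵐ[volume.restrict (Set.Ioc A (A + L))] g') (n : ℤ) :
    fourierCoeff (AddCircle.liftIoc L A g') n =
      (1 / L : ℂ) * ∫ t in A..(A + L),
        g t * Complex.exp (-(((2 * Real.pi * n * t / L : ℝ) : ℂ) * Complex.I)) := by
  rw [fourierCoeff_eq_intervalIntegral _ n A, Complex.real_smul]
  congr 1
  · push_cast; ring
  refine intervalIntegral.integral_congr_ae ?_
  rw [uIoc_of_le (by linarith [hL.out] : A ≤ A + L)]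
  have hgg2 : ∀ᵐ x ∂(volume : Measure ℝ), x ∈ Set.Ioc A (A + L) → g x = g' x :=
    (ae_restrict_iff' measurableSet_Ioc).mp hgg'
  filter_upwards [hgg2] with t ht
  intro htm
  rw [AddCircle.liftIoc_coe_apply htm, ← ht htm, smul_eq_mul, mul_comm]
  congr 1
  rw [fourier_coe_apply]
  congr 1
  push_cast
  ring

lemma memLp_lift {g : ℝ → ℂ} (hg : StronglyMeasurable g)
    (hint : Integrable (fun t => ‖g t‖ ^ 2)
      ((volume : Measure ℝ).restrict (Set.Ioc A (A + L)))) :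
    MemLp (AddCircle.liftIoc L A g) 2 AddCircle.haarAddCircle := by
  have hsm := sm_liftIoc A L (g := g) hg
  rw [memLp_two_iff_integrable_sq_norm hsm.aestronglyMeasurable]
  have hvol : Integrable (fun x => ‖AddCircle.liftIoc L A g x‖ ^ 2)
      (volume : Measure (AddCircle L)) := by
    rw [← (AddCircle.measurePreserving_mk L A).map_eq,
      integrable_map_measure
        ((continuous_pow 2).comp_stronglyMeasurable (sm_liftIoc A L hg).norm).aestronglyMeasurable
        AddCircle.measurable_mk'.aemeasurable]
    refine hint.congr ?_
    filter_upwards [ae_restrict_mem measurableSet_Ioc] with t ht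
    simp only [Function.comp_apply, AddCircle.liftIoc_coe_apply ht]
  rw [AddCircle.volume_eq_smul_haarAddCircle] at hvol
  exact (integrable_smul_measure (by simp [hL.out.ne', hL.out.le, hL.out])
    (by simp)).mp hvol

lemma fourierCoeff_conj (g : AddCircle L → ℂ) (n : ℤ) :
    fourierCoeff (fun x => (starRingEnd ℂ) (g x)) n =
      (starRingEnd ℂ) (fourierCoeff g (-n)) := by
  unfold fourierCoeff
  rw [← integral_conj]
  refine integral_congr_ae (Filter.Eventually.of_forall fun x => ?_)
  simp only [smul_eq_mul, neg_neg, map_mul, ← fourier_neg]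

lemma fourierCoeff_add (u v : AddCircle L → ℂ) (n : ℤ)
    (hu : Integrable u AddCircle.haarAddCircle)
    (hv : Integrable v AddCircle.haarAddCircle) :
    fourierCoeff (fun x => u x + v x) n = fourierCoeff u n + fourierCoeff v n := by
  have hu' : Integrable (fun x => fourier (-n) x • u x) AddCircle.haarAddCircle := by
    simp only [smul_eq_mul]
    refine hu.bdd_mul ((fourier (-n)).continuous.aestronglyMeasurable) (c := 1) (Filter.Eventually.of_forall fun x => ?_)
    rw [fourier_apply]
    exact le_of_eq (Circle.norm_coe _)
  have hv' : Integrable (fun x => fourier (-n) x • v x) AddCircle.haarAddCircle := by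
    simp only [smul_eq_mul]
    refine hv.bdd_mul ((fourier (-n)).continuous.aestronglyMeasurable) (c := 1) (Filter.Eventually.of_forall fun x => ?_)
    rw [fourier_apply]
    exact le_of_eq (Circle.norm_coe _)
  unfold fourierCoeff
  rw [← integral_add hu' hv']
  exact integral_congr_ae (Filter.Eventually.of_forall fun x => smul_add _ _ _)

lemma coeff_eq (cH cG r : ℤ → ℂ)
    (hrel : ∀ n : ℤ, cH n = (if n < 0 then 0 else if n = 0 then 1 else 2) * cG n)
    (hconj : ∀ n : ℤ, (starRingEnd ℂ) (cG (-n)) = cG n)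
    (hr : ∀ n : ℤ, r n = (cH n + (starRingEnd ℂ) (cH (-n))) / 2) :
    ∀ n : ℤ, r n = cG n := by
  intro n
  rw [hr n]
  rcases lt_trichotomy n 0 with hn | hn | hn
  · have h1 : cH n = 0 := by rw [hrel n, if_pos hn, zero_mul]
    have h2 : cH (-n) = 2 * cG (-n) := by
      rw [hrel (-n), if_neg (by omega), if_neg (by omega)]
    rw [h1, h2, map_mul, hconj n]
    have h5 : (starRingEnd ℂ) 2 = 2 := by
      rw [show (2:ℂ) = ((2:ℝ):ℂ) by norm_num, Complex.conj_ofReal]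
    rw [h5]
    ring
  · subst hn
    have h1 : cH 0 = cG 0 := by rw [hrel 0]; norm_num
    have hc : (starRingEnd ℂ) (cG 0) = cG 0 := by
      have h6 := hconj 0
      rwa [neg_zero] at h6
    rw [neg_zero, h1, hc]
    ring
  · have h1 : cH n = 2 * cG n := by
      rw [hrel n, if_neg (by omega), if_neg (by omega)]
    have h2 : cH (-n) = 0 := by rw [hrel (-n), if_pos (by omega), zero_mul]
    rw [h1, h2, map_zero]
    ring

lemma sum_ineq' (eH eG : ℤ → ℝ)
    (h0 : eH 0 = eG 0)
    (hneg : ∀ n : ℤ, n < 0 → eH n = 0)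
    (hpos : ∀ n : ℤ, 0 < n → eH n = 4 * eG n)
    (hsym : ∀ n : ℤ, eG (-n) = eG n)
    (h00 : 0 ≤ eG 0)
    (hsumH : Summable eH) (hsumG : Summable eG) :
    ∑' n : ℤ, eH n ≤ 2 * ∑' n : ℤ, eG n := by
  have h1H : Summable (fun n : ℕ => eH ((n : ℕ) : ℤ)) :=
    hsumH.comp_injective Nat.cast_injective
  have h2H : Summable (fun n : ℕ => eH (-((n : ℤ) + 1))) :=
    hsumH.comp_injective (fun a b hab => by omega)
  have h1G : Summable (fun n : ℕ => eG ((n : ℕ) : ℤ)) :=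
    hsumG.comp_injective Nat.cast_injective
  have h2G : Summable (fun n : ℕ => eG (-((n : ℤ) + 1))) :=
    hsumG.comp_injective (fun a b hab => by omega)
  have hSH : ∑' n : ℤ, eH n = eG 0 + 4 * ∑' n : ℕ, eG ((n : ℤ) + 1) := by
    rw [tsum_of_nat_of_neg_add_one h1H h2H]
    have hn : ∀ n : ℕ, eH (-((n : ℤ) + 1)) = 0 := fun n => hneg _ (by omega)
    rw [tsum_congr hn, tsum_zero, add_zero, Summable.tsum_eq_zero_add h1H]
    have hp : ∀ n : ℕ, eH (((n + 1 : ℕ) : ℕ) : ℤ) = 4 * eG ((n : ℤ) + 1) := by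
      intro n
      have hc : (((n + 1 : ℕ) : ℕ) : ℤ) = (n : ℤ) + 1 := by push_cast; ring
      rw [hc, hpos _ (by omega)]
    rw [tsum_congr hp, tsum_mul_left, Nat.cast_zero, h0]
  have hSG : ∑' n : ℤ, eG n = eG 0 + 2 * ∑' n : ℕ, eG ((n : ℤ) + 1) := by
    rw [tsum_of_nat_of_neg_add_one h1G h2G, Summable.tsum_eq_zero_add h1G]
    have hn : ∀ n : ℕ, eG (-((n : ℤ) + 1)) = eG ((n : ℤ) + 1) := fun n => hsym _
    have hs : ∀ n : ℕ, eG (((n + 1 : ℕ) : ℕ) : ℤ) = eG ((n : ℤ) + 1) := by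
      intro n
      have hc : (((n + 1 : ℕ) : ℕ) : ℤ) = (n : ℤ) + 1 := by push_cast; ring
      rw [hc]
    rw [tsum_congr hn, tsum_congr hs, Nat.cast_zero]
    ring
  rw [hSH, hSG]
  linarith

end AnalyticProj

/-- Analytic projection lemma: from `f` with `|f| ≤ 1` on an interval `I` of length `L`,
the function `h` with Fourier series `c₀(|f|) + 2 ∑_{s≥1} c_s(|f|) e^{2πist/L}`
satisfies `Re h = |f|` a.e. on `I` and `‖h‖_{L²(I)} ≤ √2 ‖f‖_{L²(I)}`. -/
theorem analytic_projection (A L : ℝ) (hL : 0 < L) (f h : ℝ → ℂ)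
    (hf_meas : AEStronglyMeasurable f (volume.restrict (Set.Icc A (A + L))))
    (hf_bd : ∀ t ∈ Set.Icc A (A + L), ‖f t‖ ≤ 1)
    (hh_int : IntegrableOn h (Set.Icc A (A + L)))
    (hh_sq : IntegrableOn (fun t => ‖h t‖ ^ 2) (Set.Icc A (A + L)))
    -- the Fourier coefficients of `h` on `I` are those of the series
    -- `c₀(|f|) + 2 ∑_{s ≥ 1} c_s(|f|) e^{2πist/L}` :
    (hcoef : ∀ s : ℤ,
      (1 / L : ℂ) * ∫ t in A..(A + L),
          h t * Complex.exp (-(((2 * Real.pi * s * t / L : ℝ) : ℂ) * Complex.I)) =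
        if s < 0 then 0
        else (if s = 0 then 1 else 2) *
          ((1 / L : ℂ) * ∫ t in A..(A + L),
            (‖f t‖ : ℂ) * Complex.exp (-(((2 * Real.pi * s * t / L : ℝ) : ℂ) * Complex.I)))) :
    (∀ᵐ t ∂(volume.restrict (Set.Icc A (A + L))), (h t).re = ‖f t‖) ∧
    ∫ t in Set.Icc A (A + L), ‖h t‖ ^ 2 ≤ 2 * ∫ t in Set.Icc A (A + L), ‖f t‖ ^ 2 := by
  haveI : Fact (0 < L) := ⟨hL⟩
  set μI := (volume : Measure ℝ).restrict (Set.Ioc A (A + L)) with hμI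
  -- measurable representatives
  have hhm : AEStronglyMeasurable h (volume.restrict (Set.Icc A (A + L))) := hh_int.1
  set h' := hhm.mk h with hh'def
  have h'sm : StronglyMeasurable h' := hhm.stronglyMeasurable_mk
  have hh'Ioc : h =ᵐ[μI] h' :=
    ae_restrict_of_ae_restrict_of_subset Set.Ioc_subset_Icc_self hhm.ae_eq_mk
  set f' := hf_meas.mk f with hf'def
  have f'sm : StronglyMeasurable f' := hf_meas.stronglyMeasurable_mk
  have hf'Ioc : f =ᵐ[μI] f' :=
    ae_restrict_of_ae_restrict_of_subset Set.Ioc_subset_Icc_self hf_meas.ae_eq_mk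
  have q'sm : StronglyMeasurable (fun t => ((‖f' t‖ : ℝ) : ℂ)) :=
    Complex.continuous_ofReal.comp_stronglyMeasurable f'sm.norm
  have hqq' : (fun t => ((‖f t‖ : ℝ) : ℂ)) =ᵐ[μI] (fun t => ((‖f' t‖ : ℝ) : ℂ)) := by
    filter_upwards [hf'Ioc] with t ht
    simp only [ht]
  clear_value h' f'
  -- the circle functions
  set H : AddCircle L → ℂ := AddCircle.liftIoc L A h' with hHdef
  set G : AddCircle L → ℂ := AddCircle.liftIoc L A (fun t => ((‖f' t‖ : ℝ) : ℂ)) with hGdef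
  have hHsm : StronglyMeasurable H := AnalyticProj.sm_liftIoc A L h'sm
  have hGsm : StronglyMeasurable G := AnalyticProj.sm_liftIoc A L q'sm
  -- square-integrability on the interval
  have hIoc_sq_h : Integrable (fun t => ‖h' t‖ ^ 2) μI := by
    refine ((hh_sq.mono_set Set.Ioc_subset_Icc_self).congr ?_)
    filter_upwards [hh'Ioc] with t ht
    rw [ht]
  have hIoc_sq_f : Integrable (fun t => ‖(fun s => ((‖f' s‖ : ℝ) : ℂ)) t‖ ^ 2) μI := by
    have hbd : ∀ᵐ t ∂μI, ‖‖((‖f' t‖ : ℝ) : ℂ)‖ ^ 2‖ ≤ 1 := by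
      filter_upwards [hf'Ioc, ae_restrict_mem measurableSet_Ioc] with t ht htm
      have h1 : ‖f t‖ ≤ 1 := hf_bd t (Set.Ioc_subset_Icc_self htm)
      have h2 : ‖((‖f' t‖ : ℝ) : ℂ)‖ = ‖f t‖ := by simp [← ht]
      rw [Real.norm_eq_abs, abs_of_nonneg (by positivity), h2]
      nlinarith [norm_nonneg (f t)]
    exact Integrable.mono' (integrable_const 1)
      (((continuous_pow 2).comp_stronglyMeasurable q'sm.norm).aestronglyMeasurable) hbd
  have hHmem : MeasureTheory.MemLp H 2 AddCircle.haarAddCircle :=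
    AnalyticProj.memLp_lift A L h'sm hIoc_sq_h
  have hGmem : MeasureTheory.MemLp G 2 AddCircle.haarAddCircle :=
    AnalyticProj.memLp_lift A L q'sm hIoc_sq_f
  -- Fourier coefficients
  set cH : ℤ → ℂ := fun n => fourierCoeff H n with hcHdef
  set cG : ℤ → ℂ := fun n => fourierCoeff G n with hcGdef
  have hrel : ∀ n : ℤ, cH n = (if n < 0 then 0 else if n = 0 then 1 else 2) * cG n := by
    intro n
    have e1 : cH n = (1 / L : ℂ) * ∫ t in A..(A + L),
        h t * Complex.exp (-(((2 * Real.pi * n * t / L : ℝ) : ℂ) * Complex.I)) :=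
      AnalyticProj.fourierCoeff_lift_eq A L hh'Ioc n
    have e2 : cG n = (1 / L : ℂ) * ∫ t in A..(A + L),
        (‖f t‖ : ℂ) * Complex.exp (-(((2 * Real.pi * n * t / L : ℝ) : ℂ) * Complex.I)) :=
      AnalyticProj.fourierCoeff_lift_eq A L hqq' n
    rw [e1, hcoef n, ← e2]
    split_ifs <;> ring
  have hconjG : ∀ n : ℤ, (starRingEnd ℂ) (cG (-n)) = cG n := by
    intro n
    have hGc : (fun x => (starRingEnd ℂ) (G x)) = G := by
      funext x
      exact Complex.conj_ofReal _
    rw [← AnalyticProj.fourierCoeff_conj L G n, hGc]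
  have hnormG : ∀ n : ℤ, ‖cG (-n)‖ = ‖cG n‖ := by
    intro n
    rw [← hconjG n, RCLike.norm_conj]
  -- integrability of H on the circle
  have hintH : Integrable H AddCircle.haarAddCircle := hHmem.integrable (by norm_num)
  have hintConjH : Integrable (fun x => (starRingEnd ℂ) (H x)) AddCircle.haarAddCircle := by
    refine Integrable.mono' hintH.norm
      ((RCLike.continuous_conj.comp_stronglyMeasurable hHsm).aestronglyMeasurable) ?_
    exact Filter.Eventually.of_forall fun x => by simp
  have hbddint : ∀ (g : AddCircle L → ℂ) (n : ℤ), Integrable g AddCircle.haarAddCircle →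
      Integrable (fun x => fourier (-n) x • g x) AddCircle.haarAddCircle := by
    intro g n hg
    simp only [smul_eq_mul]
    refine hg.bdd_mul ((fourier (-n)).continuous.aestronglyMeasurable) (c := 1) (Filter.Eventually.of_forall fun x => ?_)
    rw [fourier_apply]
    exact le_of_eq (Circle.norm_coe _)
  -- the real part of H
  set R : AddCircle L → ℂ := fun x => (((H x).re : ℝ) : ℂ) with hRdef
  have hRsm : StronglyMeasurable R :=
    Complex.continuous_ofReal.comp_stronglyMeasurable
      (Complex.continuous_re.comp_stronglyMeasurable hHsm)
  have hRmem : MeasureTheory.MemLp R 2 AddCircle.haarAddCircle := by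
    refine hHmem.of_le hRsm.aestronglyMeasurable
      (Filter.Eventually.of_forall fun x => ?_)
    rw [Complex.norm_real, Real.norm_eq_abs]
    exact Complex.abs_re_le_norm _
  have hfourierR : ∀ n : ℤ, fourierCoeff R n
      = (cH n + (starRingEnd ℂ) (cH (-n))) / 2 := by
    intro n
    have hadd : fourierCoeff (fun x => H x + (starRingEnd ℂ) (H x)) n
        = cH n + fourierCoeff (fun x => (starRingEnd ℂ) (H x)) n :=
      AnalyticProj.fourierCoeff_add L H _ n hintH hintConjH
    have hR2 : R = fun x => (2⁻¹ : ℂ) • (H x + (starRingEnd ℂ) (H x)) := by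
      funext x
      rw [smul_eq_mul, Complex.add_conj]
      push_cast
      ring
    rw [hR2]
    rw [show (fun x => (2⁻¹ : ℂ) • (H x + (starRingEnd ℂ) (H x)))
      = (2⁻¹ : ℂ) • (fun x => H x + (starRingEnd ℂ) (H x)) from rfl]
    rw [fourierCoeff.const_smul, hadd, AnalyticProj.fourierCoeff_conj L H n]
    rw [smul_eq_mul]
    ring
  have hRG : ∀ n : ℤ, fourierCoeff R n = cG n :=
    AnalyticProj.coeff_eq cH cG (fun n => fourierCoeff R n) hrel hconjG hfourierR
  -- pass to L² and use uniqueness of Fourier coefficients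
  set Hl := hHmem.toLp H with hHldef
  set Gl := hGmem.toLp G with hGldef
  set Rl := hRmem.toLp R with hRldef
  have hcoH : ∀ n : ℤ, fourierCoeff (Hl : AddCircle L → ℂ) n = cH n := fun n =>
    integral_congr_ae (by filter_upwards [hHmem.coeFn_toLp] with x hx; rw [hx])
  have hcoG : ∀ n : ℤ, fourierCoeff (Gl : AddCircle L → ℂ) n = cG n := fun n =>
    integral_congr_ae (by filter_upwards [hGmem.coeFn_toLp] with x hx; rw [hx])
  have hcoR : ∀ n : ℤ, fourierCoeff (Rl : AddCircle L → ℂ) n = fourierCoeff R n := fun n =>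
    integral_congr_ae (by filter_upwards [hRmem.coeFn_toLp] with x hx; rw [hx])
  have hLpEq : Rl = Gl := by
    apply fourierBasis.repr.injective
    refine lp.ext (funext fun n => ?_)
    rw [fourierBasis_repr, fourierBasis_repr, hcoR n, hcoG n, hRG n]
  -- first conclusion
  have hae_circle : ∀ᵐ x ∂(volume : Measure (AddCircle L)), R x = G x := by
    have h2 : (Rl : AddCircle L → ℂ) =ᵐ[AddCircle.haarAddCircle] G := by
      rw [hLpEq]
      exact hGmem.coeFn_toLp
    have h1 : R =ᵐ[AddCircle.haarAddCircle] G := hRmem.coeFn_toLp.symm.trans h2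
    exact AnalyticProj.ae_haar_of_volume L h1
  have haeIoc : ∀ᵐ t ∂μI, (h t).re = ‖f t‖ := by
    have hmeas : MeasurableSet {x : AddCircle L | R x = G x} :=
      measurableSet_eq_fun hRsm.measurable hGsm.measurable
    have h2 := AnalyticProj.ae_of_ae_circle A L hmeas hae_circle
    filter_upwards [h2, hh'Ioc, hf'Ioc, ae_restrict_mem measurableSet_Ioc]
      with t hRe hh hf htm
    have hH : H ((t : ℝ) : AddCircle L) = h' t := AddCircle.liftIoc_coe_apply htm
    have hG2 : G ((t : ℝ) : AddCircle L) = ((‖f' t‖ : ℝ) : ℂ) :=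
      AddCircle.liftIoc_coe_apply htm
    have h3 : (((H ((t : ℝ) : AddCircle L)).re : ℝ) : ℂ) = G ((t : ℝ) : AddCircle L) := hRe
    rw [hH, hG2] at h3
    have h4 : (h' t).re = ‖f' t‖ := Complex.ofReal_inj.mp h3
    rw [hh, h4, hf]
  refine ⟨AnalyticProj.coe_ae_Ioc A L haeIoc, ?_⟩
  -- Parseval
  have hsumH : Summable (fun n : ℤ => ‖cH n‖ ^ 2) := by
    have hm := (lp.memℓp (fourierBasis.repr Hl)).summable
      (by norm_num : (0:ℝ) < (2 : ENNReal).toReal)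
    refine (summable_congr fun n => ?_).mp hm
    rw [fourierBasis_repr, hcoH n]
    rw [show ((2 : ENNReal).toReal) = ((2 : ℕ) : ℝ) by norm_num, Real.rpow_natCast]
  have hsumG : Summable (fun n : ℤ => ‖cG n‖ ^ 2) := by
    have hm := (lp.memℓp (fourierBasis.repr Gl)).summable
      (by norm_num : (0:ℝ) < (2 : ENNReal).toReal)
    refine (summable_congr fun n => ?_).mp hm
    rw [fourierBasis_repr, hcoG n]
    rw [show ((2 : ENNReal).toReal) = ((2 : ℕ) : ℝ) by norm_num, Real.rpow_natCast]
  have hPar_H : ∑' n : ℤ, ‖cH n‖ ^ 2 = ∫ x, ‖H x‖ ^ 2 ∂AddCircle.haarAddCircle :=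
    calc ∑' n : ℤ, ‖cH n‖ ^ 2
        = ∑' n : ℤ, ‖fourierCoeff (Hl : AddCircle L → ℂ) n‖ ^ 2 :=
          tsum_congr fun n => by rw [hcoH n]
      _ = ∫ x, ‖(Hl : AddCircle L → ℂ) x‖ ^ 2 ∂AddCircle.haarAddCircle :=
          tsum_sq_fourierCoeff Hl
      _ = ∫ x, ‖H x‖ ^ 2 ∂AddCircle.haarAddCircle :=
          integral_congr_ae (by filter_upwards [hHmem.coeFn_toLp] with x hx; rw [hx])
  have hPar_G : ∑' n : ℤ, ‖cG n‖ ^ 2 = ∫ x, ‖G x‖ ^ 2 ∂AddCircle.haarAddCircle :=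
    calc ∑' n : ℤ, ‖cG n‖ ^ 2
        = ∑' n : ℤ, ‖fourierCoeff (Gl : AddCircle L → ℂ) n‖ ^ 2 :=
          tsum_congr fun n => by rw [hcoG n]
      _ = ∫ x, ‖(Gl : AddCircle L → ℂ) x‖ ^ 2 ∂AddCircle.haarAddCircle :=
          tsum_sq_fourierCoeff Gl
      _ = ∫ x, ‖G x‖ ^ 2 ∂AddCircle.haarAddCircle :=
          integral_congr_ae (by filter_upwards [hGmem.coeFn_toLp] with x hx; rw [hx])
  have hIntH : ∫ t in Set.Icc A (A + L), ‖h t‖ ^ 2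
      = L * ∫ x, ‖H x‖ ^ 2 ∂AddCircle.haarAddCircle :=
    AnalyticProj.integral_sq_lift A L h'sm hh'Ioc
  have hIntF : ∫ t in Set.Icc A (A + L), ‖f t‖ ^ 2
      = L * ∫ x, ‖G x‖ ^ 2 ∂AddCircle.haarAddCircle := by
    rw [← AnalyticProj.integral_sq_lift A L q'sm hqq']
    refine integral_congr_ae (Filter.Eventually.of_forall fun t => ?_)
    simp only [Complex.norm_real, norm_norm]
  clear_value cH cG
  have hkey : ∑' n : ℤ, ‖cH n‖ ^ 2 ≤ 2 * ∑' n : ℤ, ‖cG n‖ ^ 2 := by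
    refine AnalyticProj.sum_ineq' (fun n => ‖cH n‖ ^ 2) (fun n => ‖cG n‖ ^ 2)
      ?_ ?_ ?_ ?_ (by positivity) hsumH hsumG
    · show ‖cH 0‖ ^ 2 = ‖cG 0‖ ^ 2
      rw [hrel 0]
      norm_num
    · intro n hn
      show ‖cH n‖ ^ 2 = 0
      rw [hrel n, if_pos hn, zero_mul, norm_zero]
      norm_num
    · intro n hn
      show ‖cH n‖ ^ 2 = 4 * ‖cG n‖ ^ 2
      rw [hrel n, if_neg (by omega), if_neg (by omega), norm_mul]
      have h7 : ‖(2 : ℂ)‖ = 2 := by norm_num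
      rw [h7]
      ring
    · intro n
      show ‖cG (-n)‖ ^ 2 = ‖cG n‖ ^ 2
      rw [hnormG n]
  calc ∫ t in Set.Icc A (A + L), ‖h t‖ ^ 2
      = L * ∑' n : ℤ, ‖cH n‖ ^ 2 := by rw [hIntH, hPar_H]
    _ ≤ L * (2 * ∑' n : ℤ, ‖cG n‖ ^ 2) := by
        exact mul_le_mul_of_nonneg_left hkey hL.le
    _ = 2 * (L * ∑' n : ℤ, ‖cG n‖ ^ 2) := by ring
    _ = 2 * ∫ t in Set.Icc A (A + L), ‖f t‖ ^ 2 := by rw [hIntF, hPar_G]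
end

section
/- Fix η ∈ (0, 1] and set E_η = 1/(1 − e^{-η}). Let (f_j)_{j=0}^n and (h_j)_{j=1}^n be bounded functions with ‖f_j‖_∞ ≤ 1 for all j and Re(h_j) = |f_j| pointwise. Define F_0 = f_0 and F_{j+1} = F_j e^{-η h_{j+1}} + f_{j+1}. Then ‖F_j‖_∞ ≤ E_η for all 0 ≤ j ≤ n. -/
/-- Inductive uniform bound in the McGehee–Pigno–Smith construction:
with `‖f_j‖_∞ ≤ 1`, `Re h_j = |f_j|`, `F_0 = f_0`, `F_{j+1} = F_j e^{-η h_{j+1}} + f_{j+1}`,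
one has `‖F_j‖_∞ ≤ E_η = 1/(1 - e^{-η})` for all `j ≤ n`. -/
theorem mps_inductive_bound (η : ℝ) (hη0 : 0 < η) (hη1 : η ≤ 1) (n : ℕ)
    (f h F : ℕ → ℝ → ℂ)
    (hf : ∀ j ≤ n, ∀ t, ‖f j t‖ ≤ 1)
    (hh : ∀ j, 1 ≤ j → j ≤ n → ∀ t, (h j t).re = ‖f j t‖)
    (hF0 : F 0 = f 0)
    (hFrec : ∀ j, j + 1 ≤ n → ∀ t,
      F (j + 1) t = F j t * Complex.exp (-(η : ℂ) * h (j + 1) t) + f (j + 1) t) :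
    ∀ j ≤ n, ∀ t, ‖F j t‖ ≤ 1 / (1 - Real.exp (-η)) := by
  have hexp1 : Real.exp (-η) < 1 := by
    rw [Real.exp_lt_one_iff]; linarith
  have hden : 0 < 1 - Real.exp (-η) := by linarith
  set E : ℝ := 1 / (1 - Real.exp (-η)) with hE
  have hE1 : 1 ≤ E := by
    rw [hE, le_div_iff₀ hden]
    have := Real.exp_pos (-η)
    linarith
  have hEmul : E * (1 - Real.exp (-η)) = 1 := one_div_mul_cancel (ne_of_gt hden)
  have key : ∀ x : ℝ, 0 ≤ x → x ≤ 1 →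
      Real.exp (-(η * x)) ≤ 1 - x + x * Real.exp (-η) := by
    intro x hx0 hx1
    have hc := convexOn_exp.2 (Set.mem_univ (0:ℝ)) (Set.mem_univ (-η))
      (by linarith : (0:ℝ) ≤ 1 - x) hx0 (by ring)
    have h1 : (1 - x) • (0:ℝ) + x • (-η) = -(η * x) := by
      simp [smul_eq_mul]; ring
    rw [h1] at hc
    simpa [smul_eq_mul, Real.exp_zero] using hc
  intro j
  induction j with
  | zero =>
    intro _ t
    rw [hF0]
    exact le_trans (hf 0 (Nat.zero_le n) t) hE1
  | succ j ih =>
    intro hjn t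
    have hjn' : j ≤ n := Nat.le_of_succ_le hjn
    have hFj : ‖F j t‖ ≤ E := ih hjn' t
    set x : ℝ := ‖f (j + 1) t‖ with hx
    have hx0 : 0 ≤ x := norm_nonneg _
    have hx1 : x ≤ 1 := hf (j + 1) hjn t
    have hre : (h (j + 1) t).re = x := hh (j + 1) (Nat.le_add_left 1 j) hjn t
    have hnormexp : ‖Complex.exp (-(η : ℂ) * h (j + 1) t)‖ = Real.exp (-(η * x)) := by
      rw [Complex.norm_exp]
      congr 1
      simp [Complex.mul_re, hre]
    rw [hFrec j hjn t]
    calc ‖F j t * Complex.exp (-(η : ℂ) * h (j + 1) t) + f (j + 1) t‖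
        ≤ ‖F j t‖ * ‖Complex.exp (-(η : ℂ) * h (j + 1) t)‖ + x := by
          rw [← norm_mul]; exact norm_add_le _ _
      _ ≤ E * Real.exp (-(η * x)) + x := by
          rw [hnormexp]
          have := Real.exp_pos (-(η * x))
          nlinarith
      _ ≤ E * (1 - x + x * Real.exp (-η)) + x := by
          nlinarith [key x hx0 hx1]
      _ = E - x * (E * (1 - Real.exp (-η))) + x := by ring
      _ = E := by rw [hEmul]; ring
end

section
/- Let γ > 0, T > 1/γ, and let (λ_n)_{n=-N,...,N} be real numbers with λ_{n+1} − λ_n ≥ γ for all n. Then for all complex numbers a_{-N}, ..., a_N, (1/T) ∫_{-T/2}^{T/2} |∑_{n=-N}^N a_n e^{2πi λ_n t}| dt ≥ (2/π)((T²−1)/T²) max_{-N ≤ n ≤ N} |a_n| (for the gap γ = 1, T > 1). -/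
open MeasureTheory intervalIntegral

section InghamAux
open Complex

lemma expInt (T θ : ℝ) (hθ : θ ≠ 0) : ∫ t in (-(T/2))..(T/2), Complex.exp ((θ:ℂ)*Complex.I*t)
      = 2 * Real.sin (θ*T/2) / θ := by
  have hc : (θ:ℂ)*Complex.I ≠ 0 := by simp [Complex.ext_iff, hθ]
  rw [integral_exp_mul_complex hc]
  have e1 : (θ:ℂ)*Complex.I*((T/2 : ℝ):ℂ) = ((θ*T/2:ℝ):ℂ)*Complex.I := by push_cast; ring
  have e2 : (θ:ℂ)*Complex.I*((-(T/2) : ℝ):ℂ) = ((-(θ*T/2):ℝ):ℂ)*Complex.I := by push_cast; ring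
  rw [e1, e2, Complex.exp_mul_I, Complex.exp_mul_I, Complex.ofReal_sin]
  simp only [Complex.ofReal_neg, Complex.cos_neg, Complex.sin_neg]
  have hθc : (θ:ℂ) ≠ 0 := by exact_mod_cast Complex.ofReal_ne_zero.mpr hθ
  field_simp
  ring

lemma keyI (T μ : ℝ) (hT : 0 < T) (hp : 2*μ*T + 1 ≠ 0) (hm : 2*μ*T - 1 ≠ 0) :
    ∫ t in (-(T/2))..(T/2), (Real.cos (Real.pi*t/T) : ℂ) *
      Complex.exp (((2 * Real.pi * μ * t : ℝ) : ℂ) * Complex.I)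
      = ((2*T*Real.cos (Real.pi*μ*T)/(Real.pi*(1-4*μ^2*T^2)) : ℝ) : ℂ) := by
  have hT' : (T:ℝ) ≠ 0 := hT.ne'
  have hπ : Real.pi ≠ 0 := Real.pi_ne_zero
  set θp : ℝ := 2*Real.pi*μ + Real.pi/T with hθp
  set θm : ℝ := 2*Real.pi*μ - Real.pi/T with hθm
  have hθp0 : θp ≠ 0 := by
    rw [hθp]; intro h; apply hp; field_simp at h; nlinarith [Real.pi_pos]
  have hθm0 : θm ≠ 0 := by
    rw [hθm]; intro h; apply hm; field_simp at h; nlinarith [Real.pi_pos]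
  have h4 : 1 - 4*μ^2*T^2 ≠ 0 := by
    have := mul_ne_zero hp hm; intro h; apply this; nlinarith
  have ptw : ∀ t : ℝ, (Real.cos (Real.pi*t/T) : ℂ) *
      Complex.exp (((2 * Real.pi * μ * t : ℝ) : ℂ) * Complex.I)
      = (Complex.exp ((θp:ℂ)*Complex.I*t) + Complex.exp ((θm:ℂ)*Complex.I*t))/2 := by
    intro t
    rw [Complex.ofReal_cos, Complex.cos, div_mul_eq_mul_div, add_mul,
      ← Complex.exp_add, ← Complex.exp_add]
    have a1 : (↑(Real.pi*t/T):ℂ)*Complex.I + (↑(2*Real.pi*μ*t):ℂ)*Complex.I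
        = (θp:ℂ)*Complex.I*t := by
      rw [hθp]; push_cast; field_simp; ring
    have a2 : (-(↑(Real.pi*t/T):ℂ))*Complex.I + (↑(2*Real.pi*μ*t):ℂ)*Complex.I
        = (θm:ℂ)*Complex.I*t := by
      rw [hθm]; push_cast; field_simp; ring
    rw [a1, a2]
  have cint : ∀ θ : ℝ, IntervalIntegrable (fun t : ℝ => Complex.exp ((θ:ℂ)*Complex.I*t))
      MeasureTheory.volume (-(T/2)) (T/2) := by
    intro θ
    exact (Complex.continuous_exp.comp (by continuity)).intervalIntegrable _ _
  rw [intervalIntegral.integral_congr (g := fun t : ℝ =>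
      (Complex.exp ((θp:ℂ)*Complex.I*t) + Complex.exp ((θm:ℂ)*Complex.I*t))/2)
      (fun t _ => ptw t)]
  rw [intervalIntegral.integral_div, intervalIntegral.integral_add (cint θp) (cint θm),
    expInt T θp hθp0, expInt T θm hθm0]
  have hreal : (2*Real.sin (θp*T/2)/θp + 2*Real.sin (θm*T/2)/θm)/2
      = 2*T*Real.cos (Real.pi*μ*T)/(Real.pi*(1-4*μ^2*T^2)) := by
    have s1 : θp*T/2 = Real.pi*μ*T + Real.pi/2 := by rw [hθp]; field_simp
    have s2 : θm*T/2 = Real.pi*μ*T - Real.pi/2 := by rw [hθm]; field_simp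
    rw [s1, s2, Real.sin_add_pi_div_two, Real.sin_sub_pi_div_two]
    set c : ℝ := Real.cos (Real.pi*μ*T)
    have lhs_eq : (2*c/θp + 2*(-c)/θm)/2 = c*(θm-θp)/(θp*θm) := by
      field_simp
      ring
    have diff : θm - θp = -(2*Real.pi/T) := by rw [hθp, hθm]; ring
    have prod : θp*θm = (Real.pi^2*(4*μ^2*T^2-1))/T^2 := by
      rw [hθp, hθm]; field_simp; ring
    rw [lhs_eq, diff, prod]
    have h4' : 4*μ^2*T^2 - 1 ≠ 0 := fun h => h4 (by linarith)
    field_simp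
    rw [show (1:ℝ) - T^2*4*μ^2 = -(T^2*4*μ^2 - 1) by ring, div_neg]
  rw [← hreal]
  push_cast
  ring

lemma sum_tele (M : ℕ) : ∑ k ∈ Finset.Icc (1:ℤ) (M:ℤ), (1:ℝ)/(4*(k:ℝ)^2-1) ≤ 1/2 := by
  have H : ∀ M : ℕ, ∑ k ∈ Finset.Icc (1:ℤ) (M:ℤ), (1:ℝ)/(4*(k:ℝ)^2-1)
      = 1/2 - 1/(2*(2*(M:ℝ)+1)) := by
    intro M
    induction M with
    | zero => norm_num
    | succ n ih =>
      rw [show ((n+1:ℕ):ℤ) = (n:ℤ)+1 by push_cast; ring,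
        show Finset.Icc (1:ℤ) ((n:ℤ)+1) = insert ((n:ℤ)+1) (Finset.Icc (1:ℤ) (n:ℤ)) by
          ext j; simp only [Finset.mem_Icc, Finset.mem_insert]; omega,
        Finset.sum_insert (by simp only [Finset.mem_Icc]; omega), ih]
      have h0 : (0:ℝ) ≤ (n:ℝ) := Nat.cast_nonneg n
      have h1 : (2*(2*(n:ℝ)+1)) ≠ 0 := by positivity
      have h2 : (4*((n:ℝ)+1)^2-1) ≠ 0 := by nlinarith
      push_cast
      have h3 : (2*(2*((n:ℝ)+1)+1)) ≠ 0 := by positivity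
      field_simp
      ring
  rw [H M]
  have : (0:ℝ) < 1/(2*(2*(M:ℝ)+1)) := by positivity
  linarith

lemma sum_pair (N : ℕ) (m : ℤ) (hm : m ∈ Finset.Icc (-(N:ℤ)) (N:ℤ)) :
    ∑ n ∈ (Finset.Icc (-(N:ℤ)) (N:ℤ)).erase m, (1:ℝ)/(4*((n-m:ℤ):ℝ)^2-1) ≤ 1 := by
  simp only [Finset.mem_Icc] at hm
  have key : ∑ n ∈ (Finset.Icc (-(N:ℤ)) (N:ℤ)).erase m, (1:ℝ)/(4*((n-m:ℤ):ℝ)^2-1)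
      = ∑ j ∈ ((Finset.Icc (-(N:ℤ)) (N:ℤ)).erase m).image (· - m), (1:ℝ)/(4*(j:ℝ)^2-1) := by
    rw [Finset.sum_image (by intro x _ y _ h; simp only at h; omega)]
  rw [key]
  have hsub : ((Finset.Icc (-(N:ℤ)) (N:ℤ)).erase m).image (· - m)
      ⊆ (Finset.Icc (-(2*N:ℤ)) (2*N:ℤ)).erase 0 := by
    intro j hj
    simp only [Finset.mem_image, Finset.mem_erase, Finset.mem_Icc] at hj ⊢
    obtain ⟨n, ⟨hn0, hn1, hn2⟩, rfl⟩ := hj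
    omega
  have hpos : ∀ j ∈ (Finset.Icc (-(2*N:ℤ)) (2*N:ℤ)).erase 0,
      j ∉ ((Finset.Icc (-(N:ℤ)) (N:ℤ)).erase m).image (· - m) → (0:ℝ) ≤ 1/(4*(j:ℝ)^2-1) := by
    intro j hj _
    simp only [Finset.mem_erase, Finset.mem_Icc] at hj
    have h1 : (1:ℝ) ≤ (j:ℝ)^2 := by
      have : (1:ℤ) ≤ j^2 := by rcases lt_or_gt_of_ne hj.1 with h|h <;> nlinarith
      exact_mod_cast this
    have h4 : (0:ℝ) < 4*(j:ℝ)^2 - 1 := by nlinarith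
    exact le_of_lt (div_pos one_pos h4)
  refine le_trans (Finset.sum_le_sum_of_subset_of_nonneg hsub hpos) ?_
  have split : (Finset.Icc (-(2*N:ℤ)) (2*N:ℤ)).erase 0
      = Finset.Icc (-(2*N:ℤ)) (-1) ∪ Finset.Icc (1:ℤ) (2*N:ℤ) := by
    ext j; simp only [Finset.mem_erase, Finset.mem_Icc, Finset.mem_union]; omega
  have hdisj : Disjoint (Finset.Icc (-(2*N:ℤ)) (-1)) (Finset.Icc (1:ℤ) (2*N:ℤ)) := by
    rw [Finset.disjoint_left]; intro j h1 h2
    simp only [Finset.mem_Icc] at h1 h2; omega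
  rw [split, Finset.sum_union hdisj]
  have neg_eq : ∑ j ∈ Finset.Icc (-(2*N:ℤ)) (-1), (1:ℝ)/(4*(j:ℝ)^2-1)
      = ∑ j ∈ Finset.Icc (1:ℤ) (2*N:ℤ), (1:ℝ)/(4*(j:ℝ)^2-1) := by
    rw [show Finset.Icc (-(2*N:ℤ)) (-1) = (Finset.Icc (1:ℤ) (2*N:ℤ)).image (fun j => -j) by
      ext j; simp only [Finset.mem_image, Finset.mem_Icc]; constructor
      · intro h; exact ⟨-j, by omega, by omega⟩
      · rintro ⟨x, hx, rfl⟩; omega]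
    rw [Finset.sum_image (by intro x _ y _ h; simp only at h; omega)]
    apply Finset.sum_congr rfl
    intro j _; push_cast; ring_nf
  rw [neg_eq]
  have := sum_tele (2*N)
  push_cast at this ⊢
  linarith

lemma normI (T μ r : ℝ) (hT : 1 < T) (hr : 1 ≤ r) (hμ : r ≤ |μ|) :
    |2*T*Real.cos (Real.pi*μ*T)/(Real.pi*(1-4*μ^2*T^2))| ≤ 2/(Real.pi*T)*(1/(4*r^2-1)) := by
  have hT0 : (0:ℝ) < T := by linarith
  have hμ2 : r^2 ≤ μ^2 := by nlinarith [abs_nonneg μ, _root_.sq_abs μ]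
  have hμ1 : (1:ℝ) ≤ μ^2 := by nlinarith
  have hT2 : (1:ℝ) ≤ T^2 := by nlinarith
  have hden : (0:ℝ) < 4*μ^2*T^2 - 1 := by nlinarith
  have h3 : (0:ℝ) < 4*r^2-1 := by nlinarith
  have hπ := Real.pi_pos
  rw [abs_div]
  have habs : |Real.pi*(1-4*μ^2*T^2)| = Real.pi*(4*μ^2*T^2-1) := by
    rw [abs_mul, abs_of_pos hπ, abs_of_neg (by linarith : 1-4*μ^2*T^2 < 0)]; ring
  rw [habs]
  have hnum : |2*T*Real.cos (Real.pi*μ*T)| ≤ 2*T := by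
    rw [abs_mul, abs_of_pos (by linarith : (0:ℝ) < 2*T)]
    nlinarith [Real.abs_cos_le_one (Real.pi*μ*T), abs_nonneg (Real.cos (Real.pi*μ*T))]
  calc |2*T*Real.cos (Real.pi*μ*T)| / (Real.pi*(4*μ^2*T^2-1))
      ≤ (2*T) / (Real.pi*(4*μ^2*T^2-1)) := by gcongr
    _ ≤ 2/(Real.pi*T)*(1/(4*r^2-1)) := by
        rw [show 2/(Real.pi*T)*(1/(4*r^2-1)) = 2/(Real.pi*T*(4*r^2-1)) by
          field_simp]
        rw [div_le_div_iff₀ (by positivity) (by positivity)]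
        have inner : T^2*(4*r^2-1) ≤ 4*μ^2*T^2-1 := by nlinarith
        nlinarith [mul_le_mul_of_nonneg_left inner (le_of_lt hπ)]

lemma gap_lower (N : ℕ) (lam : ℤ → ℝ)
    (hgap : ∀ n : ℤ, -(N : ℤ) ≤ n → n < (N : ℤ) → lam n + 1 ≤ lam (n + 1))
    {n m : ℤ} (hn : n ∈ Finset.Icc (-(N:ℤ)) (N:ℤ)) (hm : m ∈ Finset.Icc (-(N:ℤ)) (N:ℤ))
    (hnm : n ≠ m) : |((n - m : ℤ):ℝ)| ≤ |lam n - lam m| := by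
  simp only [Finset.mem_Icc] at hn hm
  have step : ∀ k : ℕ, ∀ p : ℤ, -(N:ℤ) ≤ p → p + k ≤ (N:ℤ) → lam p + k ≤ lam (p + k) := by
    intro k
    induction k with
    | zero => intro p _ _; simp
    | succ j ih =>
      intro p hp hpk
      have h1 := ih p hp (by omega)
      have h2 := hgap (p + j) (by omega) (by omega)
      have e : p + ((j:ℤ)+1) = (p + j) + 1 := by ring
      push_cast
      rw [e]
      push_cast at h1
      linarith
  rcases lt_or_gt_of_ne hnm with h | h
  · -- n < m
    have := step (m - n).toNat n (by omega) (by omega)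
    rw [show n + ((m-n).toNat : ℤ) = m by omega] at this
    have hc : ((m - n).toNat : ℝ) = ((m:ℝ) - n) := by
      have : ((m-n).toNat : ℤ) = m - n := by omega
      exact_mod_cast congrArg (Int.cast : ℤ → ℝ) this
    rw [hc] at this
    rw [show |((n - m : ℤ):ℝ)| = |((m - n : ℤ):ℝ)| by push_cast; rw [abs_sub_comm],
      abs_sub_comm,
      _root_.abs_of_nonneg (by push_cast; linarith : (0:ℝ) ≤ ((m - n:ℤ):ℝ)),
      _root_.abs_of_nonneg (by linarith)]
    push_cast
    linarith
  · have := step (n - m).toNat m (by omega) (by omega)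
    rw [show m + ((n-m).toNat : ℤ) = n by omega] at this
    have hc : ((n - m).toNat : ℝ) = ((n:ℝ) - m) := by
      have : ((n-m).toNat : ℤ) = n - m := by omega
      exact_mod_cast congrArg (Int.cast : ℤ → ℝ) this
    rw [hc] at this
    rw [_root_.abs_of_nonneg (by push_cast; linarith : (0:ℝ) ≤ ((n - m:ℤ):ℝ)),
      _root_.abs_of_nonneg (by linarith)]
    push_cast
    linarith

/-- Ingham's L¹ inequality (gap `γ = 1`, `T > 1`): for `1`-separated frequencies
`λ_{n+1} - λ_n ≥ 1`, the mean of `|∑_{n=-N}^N a_n e^{2πiλ_n t}|` over `[-T/2, T/2]`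
is at least `(2/π)((T²-1)/T²) max |a_n|`. -/
theorem ingham_L1 (N : ℕ) (lam : ℤ → ℝ)
    (hgap : ∀ n : ℤ, -(N : ℤ) ≤ n → n < (N : ℤ) → lam n + 1 ≤ lam (n + 1))
    (a : ℤ → ℂ) (T : ℝ) (hT : 1 < T) :
    ∀ m ∈ Finset.Icc (-(N : ℤ)) (N : ℤ),
      (2 / Real.pi) * ((T ^ 2 - 1) / T ^ 2) * ‖a m‖ ≤
        (1 / T) * ∫ t in (-(T/2))..(T/2),
          ‖∑ n ∈ Finset.Icc (-(N : ℤ)) (N : ℤ),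
            a n * Complex.exp (((2 * Real.pi * lam n * t : ℝ) : ℂ) * Complex.I)‖ := by
  have hT0 : (0:ℝ) < T := by linarith
  have hπ := Real.pi_pos
  set S := Finset.Icc (-(N : ℤ)) (N : ℤ) with hS
  set F : ℝ → ℂ := fun t => ∑ n ∈ S, a n * Complex.exp (((2*Real.pi*lam n*t : ℝ):ℂ)*Complex.I)
    with hF
  -- continuity facts
  have cexpC : ∀ c : ℝ, Continuous fun t : ℝ => Complex.exp (((c*t : ℝ):ℂ)*Complex.I) := by
    intro c
    exact Complex.continuous_exp.comp
      ((Complex.continuous_ofReal.comp (continuous_const.mul continuous_id)).mul continuous_const)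
  have contF : Continuous F := by
    apply continuous_finset_sum
    intro n _
    exact continuous_const.mul (cexpC (2*Real.pi*lam n))
  -- the key estimate for a maximizing index
  have main : ∀ m ∈ S, (∀ n ∈ S, ‖a n‖ ≤ ‖a m‖) →
      (2*T/Real.pi) * ‖a m‖ - (2/(Real.pi*T)) * ‖a m‖ ≤
        ∫ t in (-(T/2))..(T/2), ‖F t‖ := by
    intro m hmS hmax
    set g : ℝ → ℂ := fun t => (Real.cos (Real.pi*t/T) : ℂ) *
      Complex.exp (((-(2*Real.pi*lam m)*t : ℝ):ℂ)*Complex.I) with hg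
    have contg : Continuous g := by
      exact ((Complex.continuous_ofReal.comp (Real.continuous_cos.comp (by fun_prop))).mul
        (cexpC (-(2*Real.pi*lam m))))
    set c : ℤ → ℝ := fun n =>
      2*T*Real.cos (Real.pi*(lam n - lam m)*T)/(Real.pi*(1-4*(lam n - lam m)^2*T^2)) with hc
    -- pointwise identity
    have ptw : ∀ t : ℝ, g t * F t = ∑ n ∈ S, a n *
        ((Real.cos (Real.pi*t/T) : ℂ) *
          Complex.exp (((2 * Real.pi * (lam n - lam m) * t : ℝ) : ℂ) * Complex.I)) := by
      intro t
      rw [hF, Finset.mul_sum]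
      apply Finset.sum_congr rfl
      intro n _
      have eadd : Complex.exp (((-(2*Real.pi*lam m)*t : ℝ):ℂ)*Complex.I) *
          Complex.exp (((2*Real.pi*lam n*t : ℝ):ℂ)*Complex.I)
          = Complex.exp (((2*Real.pi*(lam n - lam m)*t : ℝ):ℂ)*Complex.I) := by
        rw [← Complex.exp_add]; congr 1; push_cast; ring
      calc g t * (a n * Complex.exp (((2*Real.pi*lam n*t : ℝ):ℂ)*Complex.I))
          = a n * ((Real.cos (Real.pi*t/T) : ℂ) *
            (Complex.exp (((-(2*Real.pi*lam m)*t : ℝ):ℂ)*Complex.I) *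
             Complex.exp (((2*Real.pi*lam n*t : ℝ):ℂ)*Complex.I))) := by rw [hg]; ring
        _ = _ := by rw [eadd]
    -- evaluate G
    have hGval : (∫ t in (-(T/2))..(T/2), g t * F t) = ∑ n ∈ S, a n * ((c n : ℝ):ℂ) := by
      rw [intervalIntegral.integral_congr (g := fun t => ∑ n ∈ S, a n *
        ((Real.cos (Real.pi*t/T) : ℂ) *
          Complex.exp (((2 * Real.pi * (lam n - lam m) * t : ℝ) : ℂ) * Complex.I)))
        (fun t _ => ptw t)]
      rw [intervalIntegral.integral_finset_sum]
      · apply Finset.sum_congr rfl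
        intro n hn
        rw [intervalIntegral.integral_const_mul]
        congr 1
        apply keyI T (lam n - lam m) hT0
        · by_cases hnm : n = m
          · subst hnm; simp
          · have h1 := gap_lower N lam hgap hn hmS hnm
            have h2 : (1:ℝ) ≤ |((n - m : ℤ):ℝ)| := by
              have : (1:ℤ) ≤ |n - m| := Int.one_le_abs (sub_ne_zero.mpr hnm)
              calc (1:ℝ) ≤ ((|n-m| : ℤ):ℝ) := by exact_mod_cast this
                _ = |((n - m : ℤ):ℝ)| := by push_cast; simp
            have := le_trans h2 h1
            rcases abs_le.mp (le_refl |lam n - lam m|) with _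
            rcases le_abs.mp this with h | h
            · intro hz; nlinarith [abs_nonneg (lam n - lam m)]
            · intro hz; nlinarith [abs_nonneg (lam n - lam m)]
        · by_cases hnm : n = m
          · subst hnm; simp
          · have h1 := gap_lower N lam hgap hn hmS hnm
            have h2 : (1:ℝ) ≤ |((n - m : ℤ):ℝ)| := by
              have : (1:ℤ) ≤ |n - m| := Int.one_le_abs (sub_ne_zero.mpr hnm)
              calc (1:ℝ) ≤ ((|n-m| : ℤ):ℝ) := by exact_mod_cast this
                _ = |((n - m : ℤ):ℝ)| := by push_cast; simp
            have := le_trans h2 h1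
            rcases le_abs.mp this with h | h
            · intro hz; nlinarith
            · intro hz; nlinarith
      · intro n _
        exact (continuous_const.mul ((Complex.continuous_ofReal.comp
          (Real.continuous_cos.comp (by fun_prop))).mul
          (cexpC (2*Real.pi*(lam n - lam m))))).intervalIntegrable _ _
    -- helper facts about n ≠ m indices
    have hsep : ∀ n ∈ S.erase m, (1:ℝ) ≤ |((n-m:ℤ):ℝ)| ∧ |((n-m:ℤ):ℝ)| ≤ |lam n - lam m| := by
      intro n hn
      have hnS := Finset.mem_of_mem_erase hn
      have hnm : n ≠ m := Finset.ne_of_mem_erase hn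
      constructor
      · have : (1:ℤ) ≤ |n - m| := Int.one_le_abs (sub_ne_zero.mpr hnm)
        calc (1:ℝ) ≤ ((|n-m| : ℤ):ℝ) := by exact_mod_cast this
          _ = |((n - m : ℤ):ℝ)| := by push_cast; simp
      · exact gap_lower N lam hgap hnS hmS hnm
    have cm : c m = 2*T/Real.pi := by
      rw [hc]; simp [sub_self]
    have hsplit : a m * ((c m : ℝ):ℂ)
        = (∫ t in (-(T/2))..(T/2), g t * F t) - ∑ n ∈ S.erase m, a n * ((c n:ℝ):ℂ) := by
      rw [hGval, ← Finset.add_sum_erase S _ hmS]; ring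
    have normg : ∀ t : ℝ, ‖g t‖ ≤ 1 := by
      intro t
      rw [hg]
      rw [norm_mul, Complex.norm_real, Real.norm_eq_abs]
      rw [show ((((-(2*Real.pi*lam m)*t : ℝ)):ℂ)*Complex.I)
        = ((-(2*Real.pi*lam m)*t : ℝ):ℂ)*Complex.I from rfl]
      rw [Complex.norm_exp_ofReal_mul_I, mul_one]
      exact Real.abs_cos_le_one _
    have normG : ‖∫ t in (-(T/2))..(T/2), g t * F t‖ ≤ ∫ t in (-(T/2))..(T/2), ‖F t‖ := by
      calc ‖∫ t in (-(T/2))..(T/2), g t * F t‖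
          ≤ ∫ t in (-(T/2))..(T/2), ‖g t * F t‖ :=
            intervalIntegral.norm_integral_le_integral_norm (by linarith)
        _ ≤ ∫ t in (-(T/2))..(T/2), ‖F t‖ := by
            apply intervalIntegral.integral_mono_on (by linarith)
              ((contg.mul contF).norm.intervalIntegrable _ _)
              (contF.norm.intervalIntegrable _ _)
            intro t _
            rw [Pi.mul_apply, norm_mul]
            nlinarith [normg t, norm_nonneg (F t), norm_nonneg (g t)]
    have tail : ∑ n ∈ S.erase m, ‖a n * ((c n:ℝ):ℂ)‖ ≤ ‖a m‖ * (2/(Real.pi*T)) := by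
      calc ∑ n ∈ S.erase m, ‖a n * ((c n:ℝ):ℂ)‖
          ≤ ∑ n ∈ S.erase m, ‖a m‖ * ((2/(Real.pi*T)) * (1/(4*((n-m:ℤ):ℝ)^2-1))) := by
            apply Finset.sum_le_sum
            intro n hn
            obtain ⟨h1, h2⟩ := hsep n hn
            have hnS := Finset.mem_of_mem_erase hn
            rw [norm_mul, Complex.norm_real, Real.norm_eq_abs]
            have hni := normI T (lam n - lam m) |((n-m:ℤ):ℝ)| hT h1 h2
            rw [_root_.sq_abs] at hni
            have hcn : |c n| ≤ (2/(Real.pi*T)) * ((1:ℝ)/(4*((n-m:ℤ):ℝ)^2-1)) := by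
              rw [hc]; exact hni
            exact mul_le_mul (hmax n hnS) hcn (abs_nonneg _) (norm_nonneg _)
        _ = ‖a m‖ * ((2/(Real.pi*T)) * ∑ n ∈ S.erase m, (1:ℝ)/(4*((n-m:ℤ):ℝ)^2-1)) := by
            rw [Finset.mul_sum, Finset.mul_sum]
        _ ≤ ‖a m‖ * ((2/(Real.pi*T)) * 1) := by
            have hs := sum_pair N m hmS
            have h2' : (0:ℝ) ≤ 2/(Real.pi*T) := by positivity
            exact mul_le_mul_of_nonneg_left (mul_le_mul_of_nonneg_left hs h2') (norm_nonneg _)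
        _ = ‖a m‖ * (2/(Real.pi*T)) := by ring
    have e1 : (2*T/Real.pi) * ‖a m‖ = ‖a m * ((c m:ℝ):ℂ)‖ := by
      rw [norm_mul, Complex.norm_real, Real.norm_eq_abs, cm,
        _root_.abs_of_pos (by positivity : (0:ℝ) < 2*T/Real.pi)]
      ring
    have big : ‖a m * ((c m:ℝ):ℂ)‖
        ≤ (∫ t in (-(T/2))..(T/2), ‖F t‖) + ‖a m‖ * (2/(Real.pi*T)) := by
      rw [hsplit]
      calc ‖(∫ t in (-(T/2))..(T/2), g t * F t) - ∑ n ∈ S.erase m, a n * ((c n:ℝ):ℂ)‖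
          ≤ ‖∫ t in (-(T/2))..(T/2), g t * F t‖ + ‖∑ n ∈ S.erase m, a n * ((c n:ℝ):ℂ)‖ :=
            norm_sub_le _ _
        _ ≤ (∫ t in (-(T/2))..(T/2), ‖F t‖) + ∑ n ∈ S.erase m, ‖a n * ((c n:ℝ):ℂ)‖ :=
            add_le_add normG (norm_sum_le _ _)
        _ ≤ _ := by linarith
    rw [← e1] at big
    linarith
  -- conclude
  intro m hm
  obtain ⟨m₀, hm₀, hmax⟩ := Finset.exists_max_image S (fun n => ‖a n‖) ⟨m, hm⟩
  have h1 := main m₀ hm₀ hmax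
  have hTsq : (0:ℝ) < T^2 := by positivity
  have hcoef : (0:ℝ) ≤ (2 / Real.pi) * ((T ^ 2 - 1) / T ^ 2) := by
    apply mul_nonneg (by positivity)
    apply div_nonneg _ (le_of_lt hTsq)
    nlinarith
  show (2 / Real.pi) * ((T ^ 2 - 1) / T ^ 2) * ‖a m‖ ≤
    (1 / T) * ∫ t in (-(T/2))..(T/2), ‖F t‖
  calc (2 / Real.pi) * ((T ^ 2 - 1) / T ^ 2) * ‖a m‖
      ≤ (2 / Real.pi) * ((T ^ 2 - 1) / T ^ 2) * ‖a m₀‖ :=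
        mul_le_mul_of_nonneg_left (hmax m hm) hcoef
    _ = (1/T) * ((2*T/Real.pi) * ‖a m₀‖ - (2/(Real.pi*T)) * ‖a m₀‖) := by
        field_simp
    _ ≤ (1/T) * ∫ t in (-(T/2))..(T/2), ‖F t‖ := by
        apply mul_le_mul_of_nonneg_left h1 (by positivity)

end InghamAux
end
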